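/- arXiv:math/0512254 — 4 statements merged into one kernel-verified Lean document; each statement's English description precedes it below -/
import Mathlib

section
/- Let (Λ,d) be a generalised Bratteli diagram of infinite depth, and let {s_λ : λ ∈ Λ} be a Cuntz–Krieger Λ-family in a C*-algebra A. For each N ∈ ℕ, let Λ_N := {λ ∈ Λ : r(λ), s(λ) ∈ ⋃_{n=0}^N V_n} and let B_N be the C*-subalgebra of A generated by {s_ρ : ρ ∈ Λ_N}. Let B be the C*-subalgebra of A generated by {s_λ : λ ∈ Λ}. Then B equals the closure of ⋃_{N=1}^∞ B_N; the projection P := ∑_{v ∈ V₀} s_v is full in B and in each B_N (the closed two-sided ideal it generates is the whole algebra); and PBP equals the closure of ⋃_{N=1}^∞ P B_N P. -/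
open scoped ENNReal

/-- A rank-2 graph (`2`-graph): a countable category whose morphisms (paths) carry a
degree functor `d : Path → ℕ × ℕ` satisfying the unique factorisation property.
Vertices are identified with the paths of degree `(0,0)`; composition is a total
function whose behaviour is constrained only on composable pairs (`s p = r q`). -/
structure TwoGraph where
  Path : Type
  countable : Countable Path
  d : Path → ℕ × ℕ
  r : Path → Path
  s : Path → Path
  comp : Path → Path → Path
  d_r : ∀ p, d (r p) = 0
  d_s : ∀ p, d (s p) = 0
  r_vertex : ∀ p, d p = 0 → r p = p
  s_vertex : ∀ p, d p = 0 → s p = p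
  id_comp : ∀ p, comp (r p) p = p
  comp_id : ∀ p, comp p (s p) = p
  r_comp : ∀ p q, s p = r q → r (comp p q) = r p
  s_comp : ∀ p q, s p = r q → s (comp p q) = s q
  d_comp : ∀ p q, s p = r q → d (comp p q) = d p + d q
  comp_assoc : ∀ p q t, s p = r q → s q = r t → comp (comp p q) t = comp p (comp q t)
  factor : ∀ (lam : Path) (m n : ℕ × ℕ), d lam = m + n →
    ∃! mn : Path × Path,
      d mn.1 = m ∧ d mn.2 = n ∧ s mn.1 = r mn.2 ∧ comp mn.1 mn.2 = lam

namespace TwoGraph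

variable (G : TwoGraph)

/-- Vertices are the paths of degree `0`. -/
def IsVertex (p : G.Path) : Prop := G.d p = 0

/-- A blue path: one whose degree lies in `ℕ e₁`. -/
def IsBlue (p : G.Path) : Prop := (G.d p).2 = 0

/-- A red path: one whose degree lies in `ℕ e₂`. -/
def IsRed (p : G.Path) : Prop := (G.d p).1 = 0

/-- A blue edge: a path of degree `e₁ = (1,0)`. -/
def IsBlueEdge (p : G.Path) : Prop := G.d p = (1, 0)

/-- A red edge: a path of degree `e₂ = (0,1)`. -/
def IsRedEdge (p : G.Path) : Prop := G.d p = (0, 1)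

/-- `Λ` is row-finite: `vΛⁿ` is finite for every vertex `v` and degree `n`. -/
def RowFinite : Prop :=
  ∀ (v : G.Path) (n : ℕ × ℕ), G.IsVertex v →
    {p : G.Path | G.r p = v ∧ G.d p = n}.Finite

/-- `Λ` is a finite `2`-graph: `Λⁿ` is finite for every degree `n`. -/
def FinitePaths : Prop := ∀ n : ℕ × ℕ, {p : G.Path | G.d p = n}.Finite

/-- `μ` is an initial segment of `lam`, i.e. `lam = μ ν` for some `ν`. -/
def InitSeg (μ lam : G.Path) : Prop := ∃ ν, G.s μ = G.r ν ∧ G.comp μ ν = lam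

/-- `μ` is a final segment of `lam`, i.e. `lam = ν μ` for some `ν`. -/
def FinalSeg (μ lam : G.Path) : Prop := ∃ ν, G.s ν = G.r μ ∧ G.comp ν μ = lam

/-- The vertex `v` lies on the path `lam`, i.e. `v = lam(n)` for some `0 ≤ n ≤ d lam`. -/
def OnPath (lam v : G.Path) : Prop :=
  G.IsVertex v ∧ ∃ μ, G.InitSeg μ lam ∧ G.s μ = v

/-- A cycle: `d lam ≠ 0`, `r lam = s lam`, and `lam(n) ≠ s lam` for `0 < n < d lam`. -/
def IsCycle (lam : G.Path) : Prop :=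
  G.d lam ≠ 0 ∧ G.r lam = G.s lam ∧
    ∀ μ, G.InitSeg μ lam → G.d μ ≠ 0 → G.d μ ≠ G.d lam → G.s μ ≠ G.s lam

/-- `lam` has no entrance: for `n ≤ d lam`, every path of degree `n` with range `r lam`
is the initial segment `lam(0,n)`. -/
def HasNoEntrance (lam : G.Path) : Prop :=
  ∀ n : ℕ × ℕ, n ≤ G.d lam → ∀ μ, G.d μ = n → G.r μ = G.r lam → G.InitSeg μ lam

/-- `lam` has no exit: for `n ≤ d lam`, every path of degree `n` with source `s lam`
is the final segment `lam(d lam - n, d lam)`. -/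
def HasNoExit (lam : G.Path) : Prop :=
  ∀ n : ℕ × ℕ, n ≤ G.d lam → ∀ μ, G.d μ = n → G.s μ = G.s lam → G.FinalSeg μ lam

/-- An isolated cycle: no entrances and no exits. -/
def IsIsolated (lam : G.Path) : Prop := G.HasNoEntrance lam ∧ G.HasNoExit lam

/-- An isolated cycle in the red graph. -/
def IsIsolatedRedCycle (lam : G.Path) : Prop :=
  G.IsRed lam ∧ G.IsCycle lam ∧ G.IsIsolated lam

/-- Condition (3.1): `Λ` is row-finite, the blue graph contains no cycles, and each
vertex is the range of an isolated cycle in the red graph. -/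
def Cond31 : Prop :=
  G.RowFinite ∧ (∀ p, G.IsBlue p → ¬ G.IsCycle p) ∧
    ∀ v, G.IsVertex v → ∃ lam, G.IsIsolatedRedCycle lam ∧ G.r lam = v

/-- A source of the blue graph: a vertex receiving no blue edges. -/
def IsBlueSource (v : G.Path) : Prop :=
  G.IsVertex v ∧ ∀ e, G.IsBlueEdge e → G.r e ≠ v

/-- A sink of the blue graph: a vertex emitting no blue edges. -/
def IsBlueSink (v : G.Path) : Prop :=
  G.IsVertex v ∧ ∀ e, G.IsBlueEdge e → G.s e ≠ v

/-- `Λ^{≤ n}`. -/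
def LeSet (n : ℕ × ℕ) : Set G.Path :=
  {lam | G.d lam ≤ n ∧
    ∀ μ, G.s lam = G.r μ → G.comp lam μ ≠ lam → ¬ G.d (G.comp lam μ) ≤ n}

/-- `IsSwap ρ τ τ' ρ'` says that `(τ', ρ') = 𝓕(ρ, τ)` is the factorisation of `ρτ`
with the degrees in the reversed order: `τ'ρ' = ρτ`, `d τ' = d τ` and `d ρ' = d ρ`. -/
def IsSwap (ρ τ τ' ρ' : G.Path) : Prop :=
  G.s ρ = G.r τ ∧ G.s τ' = G.r ρ' ∧ G.d τ' = G.d τ ∧ G.d ρ' = G.d ρ ∧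
    G.comp τ' ρ' = G.comp ρ τ

/-- The edge `e` occurs at position `n` in the red path `μ`. -/
def OccAt (μ e : G.Path) (n : ℕ) : Prop :=
  ∃ ρ ξ, G.d ρ = (0, n) ∧ G.s ρ = G.r e ∧ G.s e = G.r ξ ∧
    G.comp ρ (G.comp e ξ) = μ

/-- `⟨μ, e⟩`: the number of occurrences of the red edge `e` in the red path `μ`. -/
noncomputable def occCount (μ e : G.Path) : ℕ :=
  Nat.card {n : ℕ // G.OccAt μ e n}

/-- Membership in `Y = (blue Λ)S`: a blue path whose source is a source of the
blue graph. -/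
def InY (α : G.Path) : Prop := G.IsBlue α ∧ G.IsBlueSource (G.s α)

/-- One step of the factorisation permutation `𝓕` of the blue paths of a GBD:
`α' = 𝓕(α)` iff `f α = α' f'` for (the) red edges `f, f'` with `s f = r α`. -/
def FStep (α α' : G.Path) : Prop :=
  G.IsBlue α ∧ G.IsBlue α' ∧
    ∃ f f', G.IsRedEdge f ∧ G.IsRedEdge f' ∧ G.s f = G.r α ∧ G.s α' = G.r f' ∧
      G.comp f α = G.comp α' f'

end TwoGraph

/-- `k`-fold iteration of the factorisation permutation, as a relation. -/
def TwoGraph.FIter (G : TwoGraph) : ℕ → G.Path → G.Path → Prop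
  | 0, α, α' => α = α'
  | k + 1, α, α' => ∃ β, G.FStep α β ∧ TwoGraph.FIter G k β α'

namespace TwoGraph

variable (G : TwoGraph)

/-- `o(α) = k`: `k` is the order of the blue path `α` under the factorisation
permutation `𝓕`. -/
def HasOrder (α : G.Path) (k : ℕ) : Prop :=
  0 < k ∧ G.FIter k α α ∧ ∀ m, 0 < m → m < k → ¬ G.FIter m α α

end TwoGraph

/-- `IsChainComp [e₁, …, eₙ] β` says `β = e₁ e₂ ⋯ eₙ`. -/
def TwoGraph.IsChainComp (G : TwoGraph) : List G.Path → G.Path → Prop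
  | [], β => G.IsVertex β
  | e :: l, β => ∃ γ, TwoGraph.IsChainComp G l γ ∧ G.s e = G.r γ ∧ β = G.comp e γ

/-- `cyclePow lam m = lam^m`, the `m`-fold concatenation of the cycle `lam`,
with `lam^0 = s lam`. -/
def TwoGraph.cyclePow (G : TwoGraph) (lam : G.Path) : ℕ → G.Path
  | 0 => G.s lam
  | m + 1 => G.comp lam (TwoGraph.cyclePow G lam m)

namespace TwoGraph

variable (G : TwoGraph)

/-! ### Relative (sub-2-graph) versions of the basic notions -/

/-- `μ` is an initial segment of `lam` within `P`. -/
def InitSegIn (P : Set G.Path) (μ lam : G.Path) : Prop :=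
  ∃ ν ∈ P, G.s μ = G.r ν ∧ G.comp μ ν = lam

/-- `μ` is a final segment of `lam` within `P`. -/
def FinalSegIn (P : Set G.Path) (μ lam : G.Path) : Prop :=
  ∃ ν ∈ P, G.s ν = G.r μ ∧ G.comp ν μ = lam

/-- A cycle of the sub-2-graph with path-set `P`. -/
def IsCycleIn (P : Set G.Path) (lam : G.Path) : Prop :=
  lam ∈ P ∧ G.d lam ≠ 0 ∧ G.r lam = G.s lam ∧
    ∀ μ ∈ P, G.InitSegIn P μ lam → G.d μ ≠ 0 → G.d μ ≠ G.d lam → G.s μ ≠ G.s lam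

def HasNoEntranceIn (P : Set G.Path) (lam : G.Path) : Prop :=
  ∀ n : ℕ × ℕ, n ≤ G.d lam → ∀ μ ∈ P, G.d μ = n → G.r μ = G.r lam → G.InitSegIn P μ lam

def HasNoExitIn (P : Set G.Path) (lam : G.Path) : Prop :=
  ∀ n : ℕ × ℕ, n ≤ G.d lam → ∀ μ ∈ P, G.d μ = n → G.s μ = G.s lam → G.FinalSegIn P μ lam

/-- An isolated cycle of the red graph of the sub-2-graph with path-set `P`. -/
def IsIsolatedRedCycleIn (P : Set G.Path) (lam : G.Path) : Prop :=
  lam ∈ P ∧ G.IsRed lam ∧ G.IsCycleIn P lam ∧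
    G.HasNoEntranceIn P lam ∧ G.HasNoExitIn P lam

def RowFiniteIn (P : Set G.Path) : Prop :=
  ∀ (v : G.Path) (n : ℕ × ℕ), G.IsVertex v →
    {p : G.Path | p ∈ P ∧ G.r p = v ∧ G.d p = n}.Finite

/-- A source of the blue graph of the sub-2-graph with path-set `P`. -/
def IsBlueSourceIn (P : Set G.Path) (v : G.Path) : Prop :=
  v ∈ P ∧ G.IsVertex v ∧ ∀ e ∈ P, G.IsBlueEdge e → G.r e ≠ v

/-- Condition (3.1) for the sub-2-graph with path-set `P`. -/
def Cond31In (P : Set G.Path) : Prop :=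
  G.RowFiniteIn P ∧ (∀ p ∈ P, G.IsBlue p → ¬ G.IsCycleIn P p) ∧
    ∀ v ∈ P, G.IsVertex v → ∃ lam, G.IsIsolatedRedCycleIn P lam ∧ G.r lam = v

/-- `Λ_j = {λ ∈ Λ : s(λ) Λ W ≠ ∅}`: the paths admitting a path from their source
into the vertex set `W`. -/
def subGraphTo (W : Set G.Path) : Set G.Path :=
  {p | ∃ μ, G.r μ = G.s p ∧ G.s μ ∈ W}

/-- `Λ` has large-permutation factorisations. -/
def HasLPF : Prop :=
  ∀ v, G.IsVertex v → ∀ l : ℕ, 0 < l → ∃ N : ℕ,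
    ∀ α, G.IsBlue α → G.r α = v → G.d α = (N, 0) →
      ∀ k, G.HasOrder α k → l < k

end TwoGraph

/-- A generalised Bratteli diagram of depth `N ∈ ℕ ∪ {∞}` with vertex decomposition
`Λ⁰ = ⊔ₙ V n`. -/
structure IsGBD (G : TwoGraph) (N : ℕ∞) (V : ℕ → Set G.Path) : Prop where
  rowFinite : G.RowFinite
  level_nonempty : ∀ n : ℕ, (n : ℕ∞) ≤ N → (V n).Nonempty
  level_finite : ∀ n : ℕ, (V n).Finite
  level_empty : ∀ n : ℕ, ¬ ((n : ℕ∞) ≤ N) → V n = ∅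
  level_vertex : ∀ n, V n ⊆ {v | G.IsVertex v}
  cover : ∀ v, G.IsVertex v → ∃ n, v ∈ V n
  level_disjoint : ∀ m n, m ≠ n → Disjoint (V m) (V n)
  blue_level : ∀ e, G.IsBlueEdge e → ∃ n, G.r e ∈ V n ∧ G.s e ∈ V (n + 1)
  sinks_bottom : ∀ v, G.IsBlueSink v → v ∈ V 0
  sources_top : ∀ v, G.IsBlueSource v → ∃ n : ℕ, (n : ℕ∞) = N ∧ v ∈ V n
  red_cycle : ∀ v, G.IsVertex v → ∃ lam, G.IsIsolatedRedCycle lam ∧ G.r lam = v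
  red_level : ∀ f, G.IsRedEdge f → ∃ n, G.r f ∈ V n ∧ G.s f ∈ V n

/-- The sub-2-graph `Λ_N` of paths joining vertices in the first `N` levels. -/
def levelPaths (G : TwoGraph) (V : ℕ → Set G.Path) (N : ℕ) : Set G.Path :=
  {p | (∃ n ≤ N, G.r p ∈ V n) ∧ (∃ n ≤ N, G.s p ∈ V n)}

/-- An infinite path in a 2-graph: a degree-preserving functor `Ω₂ → Λ`, recorded by
its segments `x(m,n)` for `m ≤ n` in `ℕ × ℕ`. -/
structure InfPath (G : TwoGraph) where
  seg : ℕ × ℕ → ℕ × ℕ → G.Path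
  deg : ∀ m n : ℕ × ℕ, m ≤ n → G.d (seg m n) = n - m
  range_seg : ∀ m n : ℕ × ℕ, m ≤ n → G.r (seg m n) = seg m m
  source_seg : ∀ m n : ℕ × ℕ, m ≤ n → G.s (seg m n) = seg n n
  comp_seg : ∀ m n p : ℕ × ℕ, m ≤ n → n ≤ p → G.comp (seg m n) (seg n p) = seg m p

/-- A Cuntz–Krieger `Λ`-family in a C*-algebra `A`. -/
structure CKFamily (G : TwoGraph) (A : Type*) [CStarAlgebra A] where
  S : G.Path → A
  ck1_sa : ∀ v, G.IsVertex v → star (S v) = S v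
  ck1_idem : ∀ v, G.IsVertex v → S v * S v = S v
  ck1_orth : ∀ v w, G.IsVertex v → G.IsVertex w → v ≠ w → S v * S w = 0
  ck2 : ∀ p q, G.s p = G.r q → S p * S q = S (G.comp p q)
  ck3 : ∀ p, star (S p) * S p = S (G.s p)
  ck4 : ∀ (v : G.Path) (n : ℕ × ℕ), G.IsVertex v →
    S v = ∑ᶠ lam ∈ {lam : G.Path | lam ∈ G.LeSet n ∧ G.r lam = v},
      S lam * star (S lam)

section CStar

variable {A : Type*} [CStarAlgebra A]

/-- The C*-subalgebra (as a subset) of `A` generated by a set `SS`. -/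
def generatedCStar (SS : Set A) : Set A :=
  closure (NonUnitalStarAlgebra.adjoin ℂ SS : Set A)

/-- `P` is full in the C*-algebra `Bset ⊆ A`: every closed two-sided ideal of `Bset`
containing `P` is all of `Bset`. -/
def FullIn (Bset : Set A) (P : A) : Prop :=
  ∀ I : Set A, I ⊆ Bset → IsClosed I →
    (∀ x ∈ I, ∀ y ∈ I, x + y ∈ I) → (∀ (c : ℂ), ∀ x ∈ I, c • x ∈ I) →
    (∀ a ∈ Bset, ∀ x ∈ I, a * x ∈ I ∧ x * a ∈ I) →
    P ∈ I → Bset ⊆ I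

/-- The sum `∑_{v ∈ Λ⁰} s_v`, which is the unit of `C*(Λ)` for finite `Λ`. -/
noncomputable def ckUnit (G : TwoGraph) (F : CKFamily G A) : A :=
  ∑ᶠ v ∈ {v : G.Path | G.IsVertex v}, F.S v

/-- The canonical unitary `U = ∑_{α ∈ Y} s_α s_{λ(α)} s_α*`. -/
noncomputable def ckU (G : TwoGraph) (F : CKFamily G A) (lam : G.Path → G.Path) : A :=
  ∑ᶠ α ∈ {α : G.Path | G.InY α}, F.S α * F.S (lam α) * star (F.S α)

/-- The gauge action: for every `z ∈ 𝕋²` there is a *-automorphism `γ_z` of the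
C*-subalgebra generated by the family with `γ_z(s_λ) = z^{d(λ)} s_λ`. -/
def GaugeInvariant (G : TwoGraph) (F : CKFamily G A) : Prop :=
  ∀ z₁ z₂ : ℂ, ‖z₁‖ = 1 → ‖z₂‖ = 1 → ∃ γ : A → A,
    Set.BijOn γ (generatedCStar (Set.range F.S)) (generatedCStar (Set.range F.S)) ∧
    (∀ x ∈ generatedCStar (Set.range F.S), ∀ y ∈ generatedCStar (Set.range F.S),
      γ (x + y) = γ x + γ y ∧ γ (x * y) = γ x * γ y) ∧
    (∀ x ∈ generatedCStar (Set.range F.S), γ (star x) = star (γ x)) ∧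
    (∀ (c : ℂ), ∀ x ∈ generatedCStar (Set.range F.S), γ (c • x) = c • γ x) ∧
    (∀ p : G.Path, γ (F.S p) = (z₁ ^ (G.d p).1 * z₂ ^ (G.d p).2) • F.S p)

end CStar

/-!
Every path `ρ` of a GBD has source in some level `V n`, and following blue edges down from
`s ρ` gives a path `λ` with `r λ ∈ V₀` and `s λ = s ρ`. Hence `s_ρ = s_ρ s_λ* P s_λ` lies in
every ideal containing `P`, and since `λ ∈ Λ_N` whenever `ρ ∈ Λ_N`, this works inside each
`B_N` as well. The sets `{s_ρ : ρ ∈ Λ_N}` increase and exhaust the generators, so the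
`B_N` form an increasing family with dense union in `B`; compressing by the projection `P`
(which lies in `B`) turns this into the statement about `PBP`, because `PBP` is closed.
-/

section GeneratedCStar

variable {A : Type*} [CStarAlgebra A]

lemma coe_topologicalClosure_adjoin (SS : Set A) :
    ((NonUnitalStarAlgebra.adjoin ℂ SS).topologicalClosure : Set A) = generatedCStar SS :=
  rfl

lemma subset_generatedCStar (SS : Set A) : SS ⊆ generatedCStar SS :=
  (NonUnitalStarAlgebra.subset_adjoin ℂ SS).trans subset_closure

lemma isClosed_generatedCStar (SS : Set A) : IsClosed (generatedCStar SS) :=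
  isClosed_closure

lemma generatedCStar_mono {SS TT : Set A} (h : SS ⊆ TT) :
    generatedCStar SS ⊆ generatedCStar TT :=
  closure_mono (NonUnitalStarAlgebra.adjoin_mono h)

lemma star_mem_generatedCStar {SS : Set A} {x : A} (hx : x ∈ generatedCStar SS) :
    star x ∈ generatedCStar SS := by
  rw [← coe_topologicalClosure_adjoin] at hx ⊢
  exact star_mem hx

lemma mul_mem_generatedCStar {SS : Set A} {x y : A} (hx : x ∈ generatedCStar SS)
    (hy : y ∈ generatedCStar SS) : x * y ∈ generatedCStar SS := by
  rw [← coe_topologicalClosure_adjoin] at hx hy ⊢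
  exact mul_mem hx hy

lemma finsum_mem_mem_generatedCStar {ι : Type*} {SS : Set A} {W : Set ι} {f : ι → A}
    (hf : ∀ i ∈ W, f i ∈ SS) : ∑ᶠ i ∈ W, f i ∈ generatedCStar SS := by
  rw [← coe_topologicalClosure_adjoin]
  exact finsum_mem_induction (· ∈ _) (zero_mem _) (fun _ _ => add_mem)
    fun i hi => subset_generatedCStar SS (hf i hi)

lemma generatedCStar_iUnion_of_directed {ι : Type*} [Nonempty ι] {S : ι → Set A}
    (hS : Directed (· ⊆ ·) S) :
    generatedCStar (⋃ i, S i) = closure (⋃ i, generatedCStar (S i)) := by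
  have hdir : Directed (· ≤ ·) fun i => NonUnitalStarAlgebra.adjoin ℂ (S i) :=
    fun i j =>
      let ⟨k, hik, hjk⟩ := hS i j
      ⟨k, NonUnitalStarAlgebra.adjoin_mono hik, NonUnitalStarAlgebra.adjoin_mono hjk⟩
  have hadjoin : NonUnitalStarAlgebra.adjoin ℂ (⋃ i, S i)
      = ⨆ i, NonUnitalStarAlgebra.adjoin ℂ (S i) :=
    (NonUnitalStarAlgebra.gc (R := ℂ) (A := A)).l_iSup
  apply le_antisymm
  · rw [generatedCStar, hadjoin, NonUnitalStarSubalgebra.coe_iSup_of_directed hdir]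
    exact closure_mono (Set.iUnion_mono fun i => subset_closure)
  · exact closure_minimal
      (Set.iUnion_subset fun i => generatedCStar_mono (Set.subset_iUnion S i))
      (isClosed_generatedCStar _)

lemma fullIn_generatedCStar_of_forall_eq_mul_mul {SS : Set A} {P : A} (hP : IsSelfAdjoint P)
    (h : ∀ g ∈ SS, ∃ a ∈ generatedCStar SS, ∃ b ∈ generatedCStar SS, g = a * P * b) :
    FullIn (generatedCStar SS) P := by
  intro I hIB hIclosed hadd hsmul hmul hPI
  have hsandwich : ∀ a ∈ generatedCStar SS, ∀ b ∈ generatedCStar SS, a * P * b ∈ I :=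
    fun a ha b hb => (hmul b hb _ (hmul a ha P hPI).1).2
  have hgen : ∀ g ∈ SS, g ∈ I ∧ star g ∈ I := by
    rintro _ hg
    obtain ⟨a, ha, b, hb, rfl⟩ := h _ hg
    refine ⟨hsandwich a ha b hb, ?_⟩
    rw [star_mul, star_mul, hP.star_eq, ← mul_assoc]
    exact hsandwich _ (star_mem_generatedCStar hb) _ (star_mem_generatedCStar ha)
  have hzero : (0 : A) ∈ I := by simpa using hsmul 0 P hPI
  have hadjoin : ∀ x ∈ NonUnitalStarAlgebra.adjoin ℂ SS, x ∈ I ∧ star x ∈ I := by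
    intro x hx
    induction hx using NonUnitalStarAlgebra.adjoin_induction with
    | mem x hx => exact hgen x hx
    | add x y _ _ hx hy => exact ⟨hadd _ hx.1 _ hy.1, by simpa using hadd _ hx.2 _ hy.2⟩
    | zero => exact ⟨hzero, by simpa using hzero⟩
    | mul x y _ _ hx hy =>
      refine ⟨(hmul x (hIB hx.1) y hy.1).1, ?_⟩
      rw [star_mul]
      exact (hmul _ (star_mem_generatedCStar (hIB hx.1)) _ hy.2).2
    | smul c x _ hx => exact ⟨hsmul c _ hx.1, by simpa using hsmul _ _ hx.2⟩
    | star x _ hx => exact ⟨hx.2, by simpa using hx.1⟩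
  exact closure_minimal (fun x hx => (hadjoin x hx).1) hIclosed

end GeneratedCStar

section Corner

variable {R : Type*} [Semigroup R] {B : Set R} {p : R}

lemma image_mul_mul_eq_inter (hmul : ∀ x ∈ B, ∀ y ∈ B, x * y ∈ B) (hp : p ∈ B)
    (hpp : IsIdempotentElem p) :
    (fun x => p * x * p) '' B = B ∩ {x | p * x * p = x} := by
  ext x
  constructor
  · rintro ⟨b, hb, rfl⟩
    refine ⟨hmul _ (hmul p hp b hb) p hp, ?_⟩
    change p * (p * b * p) * p = p * b * p
    rw [← mul_assoc, ← mul_assoc, hpp.eq, mul_assoc (p * b), hpp.eq]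
  · rintro ⟨hxB, hx⟩
    exact ⟨x, hxB, hx⟩

variable [TopologicalSpace R] [ContinuousMul R] [T2Space R]

lemma isClosed_image_mul_mul (hB : IsClosed B) (hmul : ∀ x ∈ B, ∀ y ∈ B, x * y ∈ B)
    (hp : p ∈ B) (hpp : IsIdempotentElem p) : IsClosed ((fun x => p * x * p) '' B) := by
  rw [image_mul_mul_eq_inter hmul hp hpp]
  exact hB.inter (isClosed_eq (by fun_prop) continuous_id)

lemma image_mul_mul_eq_closure_iUnion {ι : Type*} {C : ι → Set R}
    (hBC : B = closure (⋃ i, C i)) (hCB : ∀ i, C i ⊆ B) (hB : IsClosed B)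
    (hmul : ∀ x ∈ B, ∀ y ∈ B, x * y ∈ B) (hp : p ∈ B) (hpp : IsIdempotentElem p) :
    (fun x => p * x * p) '' B = closure (⋃ i, (fun x => p * x * p) '' C i) := by
  apply le_antisymm
  · rw [← Set.image_iUnion]
    nth_rewrite 1 [hBC]
    exact image_closure_subset_closure_image (by fun_prop)
  · exact closure_minimal (Set.iUnion_subset fun i => Set.image_mono (hCB i))
      (isClosed_image_mul_mul hB hmul hp hpp)

end Corner

section GBD

variable {G : TwoGraph} {N : ℕ∞} {V : ℕ → Set G.Path}

lemma levelPaths_mono (G : TwoGraph) (V : ℕ → Set G.Path) : Monotone (levelPaths G V) := by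
  rintro M N hMN p ⟨⟨a, haM, ha⟩, ⟨b, hbM, hb⟩⟩
  exact ⟨⟨a, haM.trans hMN, ha⟩, ⟨b, hbM.trans hMN, hb⟩⟩

lemma IsGBD.exists_mem_levelPaths (hGBD : IsGBD G N V) (p : G.Path) :
    ∃ M, p ∈ levelPaths G V M := by
  obtain ⟨a, ha⟩ := hGBD.cover (G.r p) (G.d_r p)
  obtain ⟨b, hb⟩ := hGBD.cover (G.s p) (G.d_s p)
  exact ⟨max a b, ⟨a, le_max_left a b, ha⟩, ⟨b, le_max_right a b, hb⟩⟩

lemma IsGBD.eq_of_mem_level (hGBD : IsGBD G N V) {v : G.Path} {m n : ℕ}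
    (hm : v ∈ V m) (hn : v ∈ V n) : m = n := by
  by_contra h
  exact Set.disjoint_left.mp (hGBD.level_disjoint m n h) hm hn

lemma IsGBD.exists_path_to_level_zero (hGBD : IsGBD G N V) {n : ℕ} {v : G.Path}
    (hv : v ∈ V n) : ∃ lam, G.r lam ∈ V 0 ∧ G.s lam = v := by
  induction n generalizing v with
  | zero =>
    have hvert : G.IsVertex v := hGBD.level_vertex 0 hv
    exact ⟨v, by rwa [G.r_vertex v hvert], G.s_vertex v hvert⟩
  | succ n ih =>
    obtain ⟨e, he, hse⟩ : ∃ e, G.IsBlueEdge e ∧ G.s e = v := by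
      by_contra! hsink
      exact n.succ_ne_zero
        (hGBD.eq_of_mem_level hv (hGBD.sinks_bottom v ⟨hGBD.level_vertex _ hv, hsink⟩))
    obtain ⟨m, hrm, hsm⟩ := hGBD.blue_level e he
    obtain rfl : m = n := Nat.succ_injective (hGBD.eq_of_mem_level (hse ▸ hsm) hv)
    obtain ⟨μ, hrμ, hsμ⟩ := ih hrm
    exact ⟨G.comp μ e, by rwa [G.r_comp μ e hsμ], by rw [G.s_comp μ e hsμ, hse]⟩

end GBD

namespace CKFamily

variable {A : Type*} [CStarAlgebra A] {G : TwoGraph} (F : CKFamily G A)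
  {W : Set G.Path}

lemma S_r_mul (lam : G.Path) : F.S (G.r lam) * F.S lam = F.S lam := by
  rw [F.ck2 _ _ (G.s_vertex _ (G.d_r lam)), G.id_comp]

lemma S_mul_S_s (lam : G.Path) : F.S lam * F.S (G.s lam) = F.S lam := by
  rw [F.ck2 _ _ (G.r_vertex _ (G.d_s lam)).symm, G.comp_id]

lemma finsum_mul_S (hW : W.Finite) (hWv : ∀ v ∈ W, G.IsVertex v) {lam : G.Path}
    (hlam : G.r lam ∈ W) : (∑ᶠ v ∈ W, F.S v) * F.S lam = F.S lam := by
  rw [← hW.coe_toFinset, finsum_mem_coe_finset, Finset.sum_mul,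
    Finset.sum_eq_single_of_mem _ (hW.mem_toFinset.mpr hlam), S_r_mul]
  intro v hv hne
  rw [← F.S_r_mul lam, ← mul_assoc,
    F.ck1_orth v _ (hWv v (hW.mem_toFinset.mp hv)) (G.d_r lam) hne, zero_mul]

lemma isIdempotentElem_finsum (hW : W.Finite) (hWv : ∀ v ∈ W, G.IsVertex v) :
    IsIdempotentElem (∑ᶠ v ∈ W, F.S v) := by
  refine (mul_finsum_mem' _ _ hW).trans (finsum_mem_congr rfl fun w hw => ?_)
  exact F.finsum_mul_S hW hWv (by rwa [G.r_vertex w (hWv w hw)])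

lemma isSelfAdjoint_finsum (hWv : ∀ v ∈ W, G.IsVertex v) :
    IsSelfAdjoint (∑ᶠ v ∈ W, F.S v) :=
  finsum_mem_induction IsSelfAdjoint (.zero A) (fun _ _ => .add)
    fun v hv => F.ck1_sa v (hWv v hv)

/-- `s_ρ = s_ρ s_{s ρ} = s_ρ s_λ* s_λ`, and `s_λ` is fixed by `∑_{v ∈ W} s_v` on the left. -/
lemma S_eq_mul_finsum_mul (hW : W.Finite) (hWv : ∀ v ∈ W, G.IsVertex v) {ρ lam : G.Path}
    (hr : G.r lam ∈ W) (hs : G.s lam = G.s ρ) :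
    F.S ρ = F.S ρ * star (F.S lam) * (∑ᶠ v ∈ W, F.S v) * F.S lam := by
  rw [mul_assoc _ (∑ᶠ v ∈ W, F.S v), F.finsum_mul_S hW hWv hr, mul_assoc, F.ck3, hs,
    S_mul_S_s]

lemma fullIn_generatedCStar_image (hW : W.Finite) (hWv : ∀ v ∈ W, G.IsVertex v)
    (X : Set G.Path) (hX : ∀ ρ ∈ X, ∃ lam ∈ X, G.r lam ∈ W ∧ G.s lam = G.s ρ) :
    FullIn (generatedCStar (F.S '' X)) (∑ᶠ v ∈ W, F.S v) := by
  refine fullIn_generatedCStar_of_forall_eq_mul_mul (F.isSelfAdjoint_finsum hWv) ?_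
  rintro _ ⟨ρ, hρ, rfl⟩
  obtain ⟨lam, hlam, hr, hs⟩ := hX ρ hρ
  have hmem : ∀ p ∈ X, F.S p ∈ generatedCStar (F.S '' X) :=
    fun p hp => subset_generatedCStar _ (Set.mem_image_of_mem F.S hp)
  exact ⟨_, mul_mem_generatedCStar (hmem ρ hρ) (star_mem_generatedCStar (hmem lam hlam)),
    _, hmem lam hlam, F.S_eq_mul_finsum_mul hW hWv hr hs⟩

end CKFamily

/-- For a GBD of infinite depth, the generated C*-algebra `B` is the
closure of the union of the subalgebras `B_N` generated by `{s_ρ : ρ ∈ Λ_N}`;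
`P = ∑_{v ∈ V₀} s_v` is full in `B` and in each `B_N`; and
`PBP` is the closure of `⋃_N P B_N P`. -/
theorem stmt11 {A : Type*} [CStarAlgebra A]
    (G : TwoGraph) (V : ℕ → Set G.Path) (hGBD : IsGBD G ⊤ V)
    (F : CKFamily G A) :
    (generatedCStar (Set.range F.S)
        = closure (⋃ N : ℕ, generatedCStar (F.S '' levelPaths G V N))) ∧
    FullIn (generatedCStar (Set.range F.S)) (∑ᶠ v ∈ V 0, F.S v) ∧
    (∀ N : ℕ, FullIn (generatedCStar (F.S '' levelPaths G V N)) (∑ᶠ v ∈ V 0, F.S v)) ∧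
    ((fun x => (∑ᶠ v ∈ V 0, F.S v) * x * (∑ᶠ v ∈ V 0, F.S v)) ''
          generatedCStar (Set.range F.S)
      = closure (⋃ N : ℕ,
          (fun x => (∑ᶠ v ∈ V 0, F.S v) * x * (∑ᶠ v ∈ V 0, F.S v)) ''
            generatedCStar (F.S '' levelPaths G V N))) := by
  have hW := hGBD.level_finite 0
  have hWv : ∀ v ∈ V 0, G.IsVertex v := fun v hv => hGBD.level_vertex 0 hv
  have hcover : ⋃ N, F.S '' levelPaths G V N = Set.range F.S := by
    rw [← Set.image_iUnion, Set.iUnion_eq_univ_iff.mpr hGBD.exists_mem_levelPaths,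
      Set.image_univ]
  have hB : generatedCStar (Set.range F.S)
      = closure (⋃ N, generatedCStar (F.S '' levelPaths G V N)) := by
    rw [← hcover]
    exact generatedCStar_iUnion_of_directed
      (Set.monotone_image.comp (levelPaths_mono G V)).directed_le
  refine ⟨hB, ?_, fun N => ?_, ?_⟩
  · rw [← Set.image_univ]
    refine F.fullIn_generatedCStar_image hW hWv _ fun ρ _ => ?_
    obtain ⟨n, hn⟩ := hGBD.cover (G.s ρ) (G.d_s ρ)
    obtain ⟨lam, hr, hs⟩ := hGBD.exists_path_to_level_zero hn
    exact ⟨lam, trivial, hr, hs⟩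
  · refine F.fullIn_generatedCStar_image hW hWv _ fun ρ ⟨_, n, hnN, hn⟩ => ?_
    obtain ⟨lam, hr, hs⟩ := hGBD.exists_path_to_level_zero hn
    exact ⟨lam, ⟨⟨0, N.zero_le, hr⟩, ⟨n, hnN, hs ▸ hn⟩⟩, hr, hs⟩
  · exact image_mul_mul_eq_closure_iUnion hB
      (fun N => generatedCStar_mono (Set.image_subset_range _ _))
      (isClosed_generatedCStar _) (fun _ hx _ hy => mul_mem_generatedCStar hx hy)
      (finsum_mem_mem_generatedCStar fun v _ => Set.mem_range_self v)
      (F.isIdempotentElem_finsum hW hWv)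
end

section
/- Let Λ be a generalised Bratteli diagram. (1) Suppose α ∈ Λ has two factorisations α = μgν and α = βhγ in which g and h are blue edges and the first coordinates of d(μ) and d(β) coincide. Then o(g) = o(h). (2) For every blue path β of length n with edge decomposition β = β₁β₂⋯βₙ (each βᵢ a blue edge), o(β) = lcm(o(β₁), o(β₂), …, o(βₙ)). -/
open scoped ENNReal

/-!
Since every vertex lies on an isolated red cycle, it emits and receives exactly one red edge, so
`𝓕` is a well-defined, injective, degree-preserving map and `o(α)` is the minimal period of `α`
under `𝓕`. Unique factorisation makes `𝓕` multiplicative, `𝓕(β₁β₂) = 𝓕(β₁)𝓕(β₂)`, hence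
`β₁β₂` is `n`-periodic iff both factors are, and its minimal period is the lcm of theirs.
For (1): the red edge `f = α(m, m + e₂)` and the blue edge `g = α(m + e₂, m + e₂ + e₁)` satisfy
`f g = α(m, m + e₁) f'`, so `α(m, m + e₁) = 𝓕(g)`. Hence the order of the blue edge at position
`m` does not change when `m` moves vertically, which connects all positions with the same first
coordinate.
-/
namespace TwoGraph

open Function

variable (G : TwoGraph)

lemma eq_of_comp_eq {p q p' q' : G.Path} (h : G.s p = G.r q) (h' : G.s p' = G.r q')
    (hc : G.comp p q = G.comp p' q') (hd : G.d p = G.d p') : p = p' ∧ q = q' := by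
  have hdq : G.d q' = G.d q := by
    have := G.d_comp p q h
    rw [hc, G.d_comp p' q' h', hd] at this
    exact add_left_cancel this
  have := (G.factor _ _ _ (G.d_comp p q h)).unique (y₁ := (p, q)) (y₂ := (p', q'))
    ⟨rfl, rfl, h, rfl⟩ ⟨hd.symm, hdq, h', hc.symm⟩
  exact Prod.ext_iff.1 this

lemma exists_factor {lam : G.Path} (m n : ℕ × ℕ) (h : G.d lam = m + n) :
    ∃ p q, G.d p = m ∧ G.d q = n ∧ G.s p = G.r q ∧ G.comp p q = lam := by
  obtain ⟨⟨p, q⟩, hpq, -⟩ := G.factor lam m n h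
  exact ⟨p, q, hpq⟩

def HasIsolatedRedCycles : Prop :=
  ∀ v, G.IsVertex v → ∃ lam, G.IsIsolatedRedCycle lam ∧ G.r lam = v

variable {G}

lemma isBlue_comp {p q : G.Path} (h : G.s p = G.r q) (hp : G.IsBlue p) (hq : G.IsBlue q) :
    G.IsBlue (G.comp p q) := by
  unfold IsBlue at *
  rw [G.d_comp p q h, Prod.snd_add, hp, hq]

lemma IsBlueEdge.isBlue {e : G.Path} (h : G.IsBlueEdge e) : G.IsBlue e := by
  unfold IsBlue; rw [h]

lemma IsIsolatedRedCycle.exists_d_eq {lam : G.Path} (h : G.IsIsolatedRedCycle lam) :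
    ∃ n, G.d lam = (0, n + 1) := by
  obtain ⟨hred, ⟨hne, -⟩, -⟩ := h
  refine ⟨(G.d lam).2 - 1, Prod.ext hred ?_⟩
  have : (G.d lam).2 ≠ 0 := fun h2 => hne (Prod.ext hred h2)
  simp only
  omega

lemma HasIsolatedRedCycles.exists_redEdge_source (hred : G.HasIsolatedRedCycles)
    (v : G.Path) (hv : G.IsVertex v) : ∃ f, G.IsRedEdge f ∧ G.s f = v := by
  obtain ⟨lam, hlam, hr⟩ := hred v hv
  obtain ⟨n, hd⟩ := hlam.exists_d_eq
  obtain ⟨ν, f, -, hf, hs, hc⟩ := G.exists_factor (0, n) (0, 1) hd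
  refine ⟨f, hf, ?_⟩
  rw [← hr, hlam.2.1.2.1, ← hc, G.s_comp _ _ hs]

lemma HasIsolatedRedCycles.redEdge_eq_of_source_eq (hred : G.HasIsolatedRedCycles)
    {f₁ f₂ : G.Path} (h₁ : G.IsRedEdge f₁) (h₂ : G.IsRedEdge f₂) (hs : G.s f₁ = G.s f₂) :
    f₁ = f₂ := by
  obtain ⟨lam, hlam, hr⟩ := hred _ (G.d_s f₁)
  obtain ⟨n, hd⟩ := hlam.exists_d_eq
  have hle : ((0, 1) : ℕ × ℕ) ≤ G.d lam := by simp [hd, Prod.mk_le_mk]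
  have hsl : G.s f₁ = G.s lam := by rw [← hlam.2.1.2.1, hr]
  obtain ⟨ν₁, hν₁, hc₁⟩ := hlam.2.2.2 _ hle f₁ h₁ hsl
  obtain ⟨ν₂, hν₂, hc₂⟩ := hlam.2.2.2 _ hle f₂ h₂ (hs ▸ hsl)
  have hdν : G.d ν₁ = G.d ν₂ := by
    have := G.d_comp _ _ hν₁
    rw [hc₁, ← hc₂, G.d_comp _ _ hν₂, h₂, ← h₁] at this
    exact (add_right_cancel this).symm
  exact (G.eq_of_comp_eq hν₁ hν₂ (hc₁.trans hc₂.symm) hdν).2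

lemma HasIsolatedRedCycles.redEdge_eq_of_range_eq (hred : G.HasIsolatedRedCycles)
    {f₁ f₂ : G.Path} (h₁ : G.IsRedEdge f₁) (h₂ : G.IsRedEdge f₂) (hr : G.r f₁ = G.r f₂) :
    f₁ = f₂ := by
  obtain ⟨lam, hlam, hrl⟩ := hred _ (G.d_r f₁)
  obtain ⟨n, hd⟩ := hlam.exists_d_eq
  have hle : ((0, 1) : ℕ × ℕ) ≤ G.d lam := by simp [hd, Prod.mk_le_mk]
  obtain ⟨ν₁, hν₁, hc₁⟩ := hlam.2.2.1 _ hle f₁ h₁ hrl.symm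
  obtain ⟨ν₂, hν₂, hc₂⟩ := hlam.2.2.1 _ hle f₂ h₂ (hr ▸ hrl.symm)
  exact (G.eq_of_comp_eq hν₁ hν₂ (hc₁.trans hc₂.symm) (h₁.trans h₂.symm)).1

lemma FStep.d_eq {α α' : G.Path} (h : G.FStep α α') : G.d α' = G.d α := by
  obtain ⟨-, -, f, f', hf, hf', hs, hs', hc⟩ := h
  have := G.d_comp f α hs
  rw [hc, G.d_comp α' f' hs', show G.d f = (0, 1) from hf, show G.d f' = (0, 1) from hf',
    add_comm] at this
  exact add_left_cancel this

lemma HasIsolatedRedCycles.exists_fStep (hred : G.HasIsolatedRedCycles) {α : G.Path}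
    (hα : G.IsBlue α) : ∃ α', G.FStep α α' := by
  obtain ⟨f, hf, hs⟩ := hred.exists_redEdge_source _ (G.d_r α)
  have hd : G.d (G.comp f α) = ((G.d α).1, 0) + (0, 1) := by
    rw [G.d_comp f α hs, show G.d f = (0, 1) from hf, add_comm]
    exact congrArg (· + (0, 1)) (Prod.ext rfl hα)
  obtain ⟨α', f', hα', hf', hs', hc⟩ := G.exists_factor _ _ hd
  exact ⟨α', hα, by simp [IsBlue, hα'], f, f', hf, hf', hs, hs', hc.symm⟩

lemma HasIsolatedRedCycles.fStep_unique (hred : G.HasIsolatedRedCycles) {α α₁ α₂ : G.Path}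
    (h₁ : G.FStep α α₁) (h₂ : G.FStep α α₂) : α₁ = α₂ := by
  have hd : G.d α₁ = G.d α₂ := h₁.d_eq.trans h₂.d_eq.symm
  obtain ⟨-, -, f₁, f₁', hf₁, -, hs₁, hs₁', hc₁⟩ := h₁
  obtain ⟨-, -, f₂, f₂', hf₂, -, hs₂, hs₂', hc₂⟩ := h₂
  obtain rfl := hred.redEdge_eq_of_source_eq hf₁ hf₂ (hs₁.trans hs₂.symm)
  exact (G.eq_of_comp_eq hs₁' hs₂' (hc₁.symm.trans hc₂) hd).1

lemma HasIsolatedRedCycles.fStep_injective (hred : G.HasIsolatedRedCycles)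
    {α₁ α₂ α' : G.Path} (h₁ : G.FStep α₁ α') (h₂ : G.FStep α₂ α') : α₁ = α₂ := by
  obtain ⟨-, -, f₁, f₁', hf₁, hf₁', hs₁, hs₁', hc₁⟩ := h₁
  obtain ⟨-, -, f₂, f₂', hf₂, hf₂', hs₂, hs₂', hc₂⟩ := h₂
  obtain rfl := hred.redEdge_eq_of_range_eq hf₁' hf₂' (hs₁'.symm.trans hs₂')
  exact (G.eq_of_comp_eq hs₁ hs₂ (hc₁.trans hc₂.symm) (hf₁.trans hf₂.symm)).2

variable (G) in
open Classical in
/-- `𝓕` as a total function: the identity off the blue paths, where `FStep` never holds. -/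
noncomputable def factPerm (α : G.Path) : G.Path :=
  if h : ∃ α', G.FStep α α' then h.choose else α

lemma factPerm_of_not_isBlue {α : G.Path} (hα : ¬ G.IsBlue α) : G.factPerm α = α :=
  dif_neg fun ⟨_, h⟩ => hα h.1

lemma HasIsolatedRedCycles.fStep_factPerm (hred : G.HasIsolatedRedCycles) {α : G.Path}
    (hα : G.IsBlue α) : G.FStep α (G.factPerm α) := by
  have h := hred.exists_fStep hα
  rw [factPerm, dif_pos h]
  exact h.choose_spec

lemma HasIsolatedRedCycles.fStep_iff (hred : G.HasIsolatedRedCycles) {α α' : G.Path}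
    (hα : G.IsBlue α) : G.FStep α α' ↔ α' = G.factPerm α :=
  ⟨fun h => hred.fStep_unique h (hred.fStep_factPerm hα),
    fun h => h ▸ hred.fStep_factPerm hα⟩

lemma HasIsolatedRedCycles.factPerm_injective (hred : G.HasIsolatedRedCycles) :
    Injective G.factPerm := by
  have key : ∀ {α β : G.Path}, G.IsBlue α → G.factPerm α = G.factPerm β → α = β := by
    intro α β hα h
    by_cases hβ : G.IsBlue β
    · exact hred.fStep_injective (hred.fStep_factPerm hα) (h ▸ hred.fStep_factPerm hβ)
    · rw [factPerm_of_not_isBlue hβ] at h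
      exact absurd (h ▸ (hred.fStep_factPerm hα).2.1) hβ
  intro α β h
  by_cases hα : G.IsBlue α
  · exact key hα h
  by_cases hβ : G.IsBlue β
  · exact (key hβ h.symm).symm
  rwa [factPerm_of_not_isBlue hα, factPerm_of_not_isBlue hβ] at h

lemma HasIsolatedRedCycles.fIter_iff (hred : G.HasIsolatedRedCycles) {α β : G.Path}
    (hα : G.IsBlue α) (k : ℕ) : G.FIter k α β ↔ G.factPerm^[k] α = β := by
  induction k generalizing α with
  | zero => rfl
  | succ k ih =>
    rw [iterate_succ_apply, ← ih (hred.fStep_factPerm hα).2.1]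
    exact ⟨fun ⟨_, hstep, hk⟩ => (hred.fStep_iff hα).1 hstep ▸ hk,
      fun hk => ⟨_, hred.fStep_factPerm hα, hk⟩⟩

lemma HasOrder.isBlue {α : G.Path} {k : ℕ} (h : G.HasOrder α k) : G.IsBlue α := by
  obtain ⟨hk, hit, -⟩ := h
  obtain ⟨k, rfl⟩ := Nat.exists_eq_add_one_of_ne_zero hk.ne'
  exact hit.choose_spec.1.1

lemma HasIsolatedRedCycles.hasOrder_iff (hred : G.HasIsolatedRedCycles) {α : G.Path}
    (hα : G.IsBlue α) (k : ℕ) : G.HasOrder α k ↔ 0 < k ∧ minimalPeriod G.factPerm α = k := by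
  simp only [HasOrder, hred.fIter_iff hα]
  constructor
  · rintro ⟨hk, hper, hmin⟩
    refine ⟨hk, le_antisymm (IsPeriodicPt.minimalPeriod_le hk hper) (not_lt.1 fun hlt => ?_)⟩
    exact hmin _ (IsPeriodicPt.minimalPeriod_pos hk hper) hlt (isPeriodicPt_minimalPeriod _ _)
  · rintro ⟨hk, rfl⟩
    exact ⟨hk, isPeriodicPt_minimalPeriod _ _,
      fun m hm hmk => not_isPeriodicPt_of_pos_of_lt_minimalPeriod hm.ne' hmk⟩

lemma HasIsolatedRedCycles.minimalPeriod_factPerm_apply (hred : G.HasIsolatedRedCycles)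
    (α : G.Path) :
    minimalPeriod G.factPerm (G.factPerm α) = minimalPeriod G.factPerm α := by
  refine minimalPeriod_eq_minimalPeriod_iff.2 fun n => ⟨fun h => ?_, fun h => h.apply⟩
  refine hred.factPerm_injective ?_
  rwa [← iterate_succ_apply' G.factPerm, iterate_succ_apply]

lemma HasIsolatedRedCycles.fStep_comp (hred : G.HasIsolatedRedCycles)
    {β₁ β₂ γ₁ γ₂ : G.Path} (hs : G.s β₁ = G.r β₂)
    (h₁ : G.FStep β₁ γ₁) (h₂ : G.FStep β₂ γ₂) :
    G.s γ₁ = G.r γ₂ ∧ G.FStep (G.comp β₁ β₂) (G.comp γ₁ γ₂) := by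
  obtain ⟨hb₁, hc₁, f, f₁, hf, hf₁, hsf, hsγ₁, hcomp₁⟩ := h₁
  obtain ⟨hb₂, hc₂, e, f₂, he, hf₂, hse, hsγ₂, hcomp₂⟩ := h₂
  have hsf₁ : G.s f₁ = G.s β₁ := by
    rw [← G.s_comp _ _ hsγ₁, ← hcomp₁, G.s_comp _ _ hsf]
  -- uniqueness of red edges: `f₁` and `e` both leave `s β₁ = r β₂`
  obtain rfl := hred.redEdge_eq_of_source_eq he hf₁ (by rw [hse, ← hs, hsf₁])
  have hsγ : G.s γ₁ = G.r γ₂ := by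
    rw [hsγ₁, ← G.r_comp _ _ hse, hcomp₂, G.r_comp _ _ hsγ₂]
  refine ⟨hsγ, isBlue_comp hs hb₁ hb₂, isBlue_comp hsγ hc₁ hc₂, f, f₂, hf, hf₂,
    by rw [G.r_comp _ _ hs, hsf], by rw [G.s_comp _ _ hsγ, hsγ₂], ?_⟩
  rw [← G.comp_assoc f β₁ β₂ hsf hs, hcomp₁, G.comp_assoc γ₁ e β₂ hsγ₁ (hsf₁.trans hs), hcomp₂,
    ← G.comp_assoc γ₁ γ₂ f₂ hsγ hsγ₂]

lemma HasIsolatedRedCycles.iterate_factPerm_comp (hred : G.HasIsolatedRedCycles)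
    (n : ℕ) {β₁ β₂ : G.Path} (hs : G.s β₁ = G.r β₂) (hb₁ : G.IsBlue β₁) (hb₂ : G.IsBlue β₂) :
    G.s (G.factPerm^[n] β₁) = G.r (G.factPerm^[n] β₂) ∧
      G.factPerm^[n] (G.comp β₁ β₂) = G.comp (G.factPerm^[n] β₁) (G.factPerm^[n] β₂) := by
  induction n generalizing β₁ β₂ with
  | zero => exact ⟨hs, rfl⟩
  | succ n ih =>
    have h₁ := hred.fStep_factPerm hb₁
    have h₂ := hred.fStep_factPerm hb₂
    obtain ⟨hs', hstep⟩ := hred.fStep_comp hs h₁ h₂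
    simp only [iterate_succ_apply]
    rw [← (hred.fStep_iff (isBlue_comp hs hb₁ hb₂)).1 hstep]
    exact ih hs' h₁.2.1 h₂.2.1

lemma HasIsolatedRedCycles.d_iterate_factPerm (hred : G.HasIsolatedRedCycles) (n : ℕ)
    {α : G.Path} (hα : G.IsBlue α) : G.d (G.factPerm^[n] α) = G.d α := by
  induction n generalizing α with
  | zero => rfl
  | succ n ih =>
    have h := hred.fStep_factPerm hα
    rw [iterate_succ_apply, ih h.2.1, h.d_eq]

lemma HasIsolatedRedCycles.isPeriodicPt_factPerm_comp_iff (hred : G.HasIsolatedRedCycles)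
    {n : ℕ} {β₁ β₂ : G.Path} (hs : G.s β₁ = G.r β₂) (hb₁ : G.IsBlue β₁) (hb₂ : G.IsBlue β₂) :
    IsPeriodicPt G.factPerm n (G.comp β₁ β₂) ↔
      IsPeriodicPt G.factPerm n β₁ ∧ IsPeriodicPt G.factPerm n β₂ := by
  obtain ⟨hs', hcomp⟩ := hred.iterate_factPerm_comp n hs hb₁ hb₂
  rw [IsPeriodicPt, IsFixedPt, hcomp]
  exact ⟨fun h => G.eq_of_comp_eq hs' hs h (hred.d_iterate_factPerm n hb₁),
    fun ⟨h₁, h₂⟩ => by rw [h₁.eq, h₂.eq]⟩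

lemma HasIsolatedRedCycles.minimalPeriod_factPerm_comp (hred : G.HasIsolatedRedCycles)
    {β₁ β₂ : G.Path} (hs : G.s β₁ = G.r β₂) (hb₁ : G.IsBlue β₁) (hb₂ : G.IsBlue β₂) :
    minimalPeriod G.factPerm (G.comp β₁ β₂) =
      (minimalPeriod G.factPerm β₁).lcm (minimalPeriod G.factPerm β₂) :=
  eq_of_forall_dvd fun n => by
    simp only [← isPeriodicPt_iff_minimalPeriod_dvd, Nat.lcm_dvd_iff,
      hred.isPeriodicPt_factPerm_comp_iff hs hb₁ hb₂]

lemma HasIsolatedRedCycles.hasOrder_comp (hred : G.HasIsolatedRedCycles)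
    {β₁ β₂ : G.Path} {k₁ k₂ : ℕ} (hs : G.s β₁ = G.r β₂)
    (h₁ : G.HasOrder β₁ k₁) (h₂ : G.HasOrder β₂ k₂) :
    G.HasOrder (G.comp β₁ β₂) (k₁.lcm k₂) := by
  have hb₁ := h₁.isBlue
  have hb₂ := h₂.isBlue
  obtain ⟨hk₁, rfl⟩ := (hred.hasOrder_iff hb₁ k₁).1 h₁
  obtain ⟨hk₂, rfl⟩ := (hred.hasOrder_iff hb₂ k₂).1 h₂
  rw [hred.hasOrder_iff (isBlue_comp hs hb₁ hb₂), hred.minimalPeriod_factPerm_comp hs hb₁ hb₂]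
  exact ⟨Nat.lcm_pos hk₁ hk₂, rfl⟩

lemma HasIsolatedRedCycles.hasOrder_of_isChainComp (hred : G.HasIsolatedRedCycles)
    (e : G.Path) (l : List G.Path) {β : G.Path} {ks : List ℕ}
    (hβ : G.IsChainComp (e :: l) β) (hks : List.Forall₂ G.HasOrder (e :: l) ks) :
    G.HasOrder β (ks.foldr Nat.lcm 1) := by
  obtain ⟨γ, hγ, hs, rfl⟩ := hβ
  obtain ⟨k, ks, he, hl, rfl⟩ := List.forall₂_cons_left_iff.1 hks
  cases l with
  | nil =>
    obtain rfl := List.forall₂_nil_left_iff.1 hl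
    have hγe : γ = G.s e := by rw [hs, G.r_vertex γ hγ]
    rw [hγe, G.comp_id, List.foldr_cons, List.foldr_nil, Nat.lcm_one_right]
    exact he
  | cons e' l =>
    exact hred.hasOrder_comp hs he (hred.hasOrder_of_isChainComp e' l hγ hl)

variable (G) in
/-- `g = α(m, m + e₁)`. -/
def IsBlueEdgeAt (α : G.Path) (m : ℕ × ℕ) (g : G.Path) : Prop :=
  G.IsBlueEdge g ∧
    ∃ x y, G.d x = m ∧ G.s x = G.r g ∧ G.s g = G.r y ∧ α = G.comp x (G.comp g y)

lemma IsBlueEdgeAt.eq {α g₁ g₂ : G.Path} {m : ℕ × ℕ} (h₁ : G.IsBlueEdgeAt α m g₁)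
    (h₂ : G.IsBlueEdgeAt α m g₂) : g₁ = g₂ := by
  obtain ⟨hg₁, x₁, y₁, hd₁, hx₁, hy₁, rfl⟩ := h₁
  obtain ⟨hg₂, x₂, y₂, hd₂, hx₂, hy₂, hα⟩ := h₂
  have hrest := (G.eq_of_comp_eq (by rwa [G.r_comp _ _ hy₁]) (by rwa [G.r_comp _ _ hy₂]) hα
    (hd₁.trans hd₂.symm)).2
  exact (G.eq_of_comp_eq hy₁ hy₂ hrest (hg₁.trans hg₂.symm)).1

lemma IsBlueEdgeAt.add_le {α g : G.Path} {m : ℕ × ℕ} (h : G.IsBlueEdgeAt α m g) :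
    m + (1, 0) ≤ G.d α := by
  obtain ⟨hg, x, y, rfl, hx, hy, rfl⟩ := h
  rw [G.d_comp _ _ (by rwa [G.r_comp _ _ hy]), G.d_comp _ _ hy, ← add_assoc,
    show G.d g = (1, 0) from hg]
  exact le_self_add

lemma exists_isBlueEdgeAt {α : G.Path} {m : ℕ × ℕ} (h : m + (1, 0) ≤ G.d α) :
    ∃ g, G.IsBlueEdgeAt α m g := by
  have hm : m ≤ G.d α := le_self_add.trans h
  obtain ⟨x, R, hx, hR, hxR, rfl⟩ := G.exists_factor _ _ (add_tsub_cancel_of_le hm).symm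
  have hR' : G.d R = (1, 0) + (G.d (G.comp x R) - m - (1, 0)) := by
    rw [hR, add_tsub_cancel_of_le (le_tsub_of_add_le_left h)]
  obtain ⟨g, y, hg, -, hgy, rfl⟩ := G.exists_factor _ _ hR'
  exact ⟨g, hg, x, y, hx, by rwa [G.r_comp _ _ hgy] at hxR, hgy, rfl⟩

lemma IsBlueEdgeAt.fStep {α g₁ g₂ : G.Path} {m : ℕ × ℕ} (h₁ : G.IsBlueEdgeAt α m g₁)
    (h₂ : G.IsBlueEdgeAt α (m + (0, 1)) g₂) : G.FStep g₂ g₁ := by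
  obtain ⟨hg₁, x₁, y₁, hd₁, hx₁, hy₁, rfl⟩ := h₁
  obtain ⟨hg₂, x₂, y₂, hd₂, hx₂, hy₂, hα⟩ := h₂
  obtain ⟨x, f, hx, hf, hxf, rfl⟩ := G.exists_factor _ _ hd₂
  have hsf : G.s f = G.r g₂ := by rwa [G.s_comp _ _ hxf] at hx₂
  have hfg : G.s f = G.r (G.comp g₂ y₂) := by rwa [G.r_comp _ _ hy₂]
  have hrest : G.comp g₁ y₁ = G.comp (G.comp f g₂) y₂ := by
    rw [G.comp_assoc _ _ _ hxf hfg] at hα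
    rw [G.comp_assoc _ _ _ hsf hy₂]
    exact (G.eq_of_comp_eq (by rwa [G.r_comp _ _ hy₁]) (by rwa [G.r_comp _ _ hfg])
      hα (hd₁.trans hx.symm)).2
  have hd : G.d (G.comp f g₂) = (1, 0) + (0, 1) := by
    rw [G.d_comp _ _ hsf, show G.d f = (0, 1) from hf, show G.d g₂ = (1, 0) from hg₂]; rfl
  obtain ⟨g, f', hg, hf', hgf', hswap⟩ := G.exists_factor _ _ hd
  have hf'y : G.s f' = G.r y₂ := by rw [← G.s_comp _ _ hgf', hswap, G.s_comp _ _ hsf, hy₂]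
  rw [← hswap, G.comp_assoc _ _ _ hgf' hf'y] at hrest
  obtain ⟨rfl, -⟩ := G.eq_of_comp_eq hy₁ (by rwa [G.r_comp _ _ hf'y]) hrest (hg₁.trans hg.symm)
  exact ⟨hg₂.isBlue, hg₁.isBlue, f, f', hf, hf', hsf, hgf', hswap.symm⟩

lemma HasIsolatedRedCycles.minimalPeriod_eq_of_isBlueEdgeAt (hred : G.HasIsolatedRedCycles)
    {α g₁ g₂ : G.Path} {m : ℕ × ℕ} (t : ℕ) (h₁ : G.IsBlueEdgeAt α m g₁)
    (h₂ : G.IsBlueEdgeAt α (m + (0, t)) g₂) :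
    minimalPeriod G.factPerm g₁ = minimalPeriod G.factPerm g₂ := by
  induction t generalizing g₂ with
  | zero => rw [h₁.eq (by rwa [show m + (0, 0) = m from add_zero m] at h₂)]
  | succ t ih =>
    have hm : m + (0, t + 1) = m + (0, t) + (0, 1) := by rw [add_assoc]; rfl
    rw [hm] at h₂
    obtain ⟨g, hg⟩ :=
      G.exists_isBlueEdgeAt (le_self_add.trans (add_right_comm _ _ (1, 0) ▸ h₂.add_le))
    rw [ih hg, (hred.fStep_iff h₂.1.isBlue).1 (hg.fStep h₂), hred.minimalPeriod_factPerm_apply]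

lemma HasIsolatedRedCycles.minimalPeriod_eq_of_isBlueEdgeAt_of_fst_eq
    (hred : G.HasIsolatedRedCycles) {α g₁ g₂ : G.Path} {m₁ m₂ : ℕ × ℕ}
    (h₁ : G.IsBlueEdgeAt α m₁ g₁) (h₂ : G.IsBlueEdgeAt α m₂ g₂) (hm : m₁.1 = m₂.1) :
    minimalPeriod G.factPerm g₁ = minimalPeriod G.factPerm g₂ := by
  wlog hle : m₁.2 ≤ m₂.2 generalizing g₁ g₂ m₁ m₂
  · exact (this h₂ h₁ hm.symm (le_of_not_ge hle)).symm
  have hm₂ : m₂ = m₁ + (0, m₂.2 - m₁.2) := Prod.ext (by simp [hm]) (by simp [hle])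
  exact hred.minimalPeriod_eq_of_isBlueEdgeAt _ h₁ (hm₂ ▸ h₂)

end TwoGraph

/-- (1) The order of the blue edge occurring at a fixed horizontal
position in two factorisations of the same path is the same.
(2) The order of a blue path is the lcm of the orders of its edges. -/
theorem stmt12 (G : TwoGraph) (N : ℕ∞) (V : ℕ → Set G.Path) (hGBD : IsGBD G N V) :
    (∀ (α μ g ν β h γ : G.Path), G.IsBlueEdge g → G.IsBlueEdge h →
      G.s μ = G.r g → G.s g = G.r ν → α = G.comp μ (G.comp g ν) →
      G.s β = G.r h → G.s h = G.r γ → α = G.comp β (G.comp h γ) →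
      (G.d μ).1 = (G.d β).1 →
      ∀ k, G.HasOrder g k ↔ G.HasOrder h k) ∧
    (∀ (l : List G.Path) (β : G.Path) (ks : List ℕ), l ≠ [] →
      (∀ e ∈ l, G.IsBlueEdge e) → G.IsChainComp l β →
      List.Forall₂ (fun e k => G.HasOrder e k) l ks →
      G.HasOrder β (ks.foldr Nat.lcm 1)) := by
  have hred : G.HasIsolatedRedCycles := hGBD.red_cycle
  refine ⟨?_, fun l β ks hl _ hβ hks => ?_⟩
  · intro α μ g ν β h γ hg hh hsμ hsg hαg hsβ hsh hαh hfst k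
    have hμ : G.IsBlueEdgeAt α (G.d μ) g := ⟨hg, μ, ν, rfl, hsμ, hsg, hαg⟩
    have hβ : G.IsBlueEdgeAt α (G.d β) h := ⟨hh, β, γ, rfl, hsβ, hsh, hαh⟩
    rw [hred.hasOrder_iff hg.isBlue, hred.hasOrder_iff hh.isBlue,
      hred.minimalPeriod_eq_of_isBlueEdgeAt_of_fst_eq hμ hβ hfst]
  · obtain ⟨e, l, rfl⟩ := List.exists_cons_of_ne_nil hl
    exact hred.hasOrder_of_isChainComp e l hβ hks
end

section
/- Let Λ be a generalised Bratteli diagram, and suppose that μα = α'μ' where μ and μ' are red paths and α and α' are blue paths (with s(μ) = r(α), s(α') = r(μ'), and μα = α'μ' as morphisms of Λ). Then o(α) = o(α'). -/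
open scoped ENNReal

namespace Stmt13Aux

open TwoGraph

lemma prodEq {p q : ℕ × ℕ} (h1 : p.1 = q.1) (h2 : p.2 = q.2) : p = q :=
  Prod.ext_iff.mpr ⟨h1, h2⟩

lemma factor_exists (G : TwoGraph) (lam : G.Path) (m n : ℕ × ℕ) (h : G.d lam = m + n) :
    ∃ p q, G.d p = m ∧ G.d q = n ∧ G.s p = G.r q ∧ G.comp p q = lam := by
  obtain ⟨⟨p, q⟩, ⟨h1, h2, h3, h4⟩, _⟩ := G.factor lam m n h
  exact ⟨p, q, h1, h2, h3, h4⟩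

lemma factor_unique (G : TwoGraph) {m n : ℕ × ℕ} {p q p' q' : G.Path}
    (hdp : G.d p = m) (hdq : G.d q = n) (hs : G.s p = G.r q)
    (hdp' : G.d p' = m) (hdq' : G.d q' = n) (hs' : G.s p' = G.r q')
    (hc : G.comp p q = G.comp p' q') :
    p = p' ∧ q = q' := by
  have hd : G.d (G.comp p q) = m + n := by rw [G.d_comp p q hs, hdp, hdq]
  obtain ⟨mn, _, huniq⟩ := G.factor (G.comp p q) m n hd
  have h1 := huniq (p, q) ⟨hdp, hdq, hs, rfl⟩
  have h2 := huniq (p', q') ⟨hdp', hdq', hs', hc.symm⟩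
  have := h1.trans h2.symm
  exact ⟨congrArg Prod.fst this, congrArg Prod.snd this⟩

/-- In a GBD, each vertex emits exactly one red edge. -/
lemma redEdge_source (G : TwoGraph)
    (hrc : ∀ v, G.IsVertex v → ∃ lam, G.IsIsolatedRedCycle lam ∧ G.r lam = v)
    (v : G.Path) (hv : G.IsVertex v) :
    ∃! f, G.IsRedEdge f ∧ G.s f = v := by
  obtain ⟨lam, ⟨hred, hcyc, hiso⟩, hr⟩ := hrc v hv
  obtain ⟨hd0, hrs, _⟩ := hcyc
  have hslam : G.s lam = v := by rw [← hrs, hr]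
  obtain ⟨L, hL⟩ : ∃ L, G.d lam = (0, L + 1) := by
    refine ⟨(G.d lam).2 - 1, prodEq hred ?_⟩
    have : (G.d lam).2 ≠ 0 := by
      intro h
      exact hd0 (prodEq hred h)
    simp; omega
  have hsum : G.d lam = (0, L) + (0, 1) := by rw [hL]; rfl
  obtain ⟨ν, f, hdν, hdf, hsν, hcν⟩ := factor_exists G lam (0, L) (0, 1) hsum
  have hsf : G.s f = v := by rw [← hslam, ← hcν, G.s_comp ν f hsν]
  refine ⟨f, ⟨hdf, hsf⟩, ?_⟩
  rintro g ⟨hdg, hsg⟩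
  have hle : ((0, 1) : ℕ × ℕ) ≤ G.d lam := by rw [hL]; exact ⟨le_refl 0, by omega⟩
  obtain ⟨ν', hsν', hcν'⟩ := hiso.2 (0, 1) hle g hdg (by rw [hsg, hslam])
  have hdν' : G.d ν' = (0, L) := by
    have := G.d_comp ν' g hsν'
    rw [hcν', hdg, hL] at this
    have h1 := congrArg Prod.fst this
    have h2 := congrArg Prod.snd this
    simp [Prod.fst_add, Prod.snd_add] at h1 h2
    exact prodEq (by simpa using h1.symm) (by omega)
  exact (factor_unique G hdν' hdg hsν' hdν hdf hsν (by rw [hcν', hcν])).2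

/-- In a GBD, each vertex receives exactly one red edge. -/
lemma redEdge_range (G : TwoGraph)
    (hrc : ∀ v, G.IsVertex v → ∃ lam, G.IsIsolatedRedCycle lam ∧ G.r lam = v)
    (v : G.Path) (hv : G.IsVertex v) :
    ∃! f, G.IsRedEdge f ∧ G.r f = v := by
  obtain ⟨lam, ⟨hred, hcyc, hiso⟩, hr⟩ := hrc v hv
  obtain ⟨hd0, hrs, _⟩ := hcyc
  obtain ⟨L, hL⟩ : ∃ L, G.d lam = (0, L + 1) := by
    refine ⟨(G.d lam).2 - 1, prodEq hred ?_⟩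
    have : (G.d lam).2 ≠ 0 := by
      intro h
      exact hd0 (prodEq hred h)
    simp; omega
  have hsum : G.d lam = (0, 1) + (0, L) := by
    rw [hL]; exact prodEq rfl (by simp [Nat.add_comm])
  obtain ⟨f, ν, hdf, hdν, hsν, hcν⟩ := factor_exists G lam (0, 1) (0, L) hsum
  have hrf : G.r f = v := by rw [← hr, ← hcν, G.r_comp f ν hsν]
  refine ⟨f, ⟨hdf, hrf⟩, ?_⟩
  rintro g ⟨hdg, hrg⟩
  have hle : ((0, 1) : ℕ × ℕ) ≤ G.d lam := by rw [hL]; exact ⟨le_refl 0, by omega⟩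
  obtain ⟨ν', hsν', hcν'⟩ := hiso.1 (0, 1) hle g hdg (by rw [hrg, hr])
  have hdν' : G.d ν' = (0, L) := by
    have := G.d_comp g ν' hsν'
    rw [hcν', hdg, hL] at this
    have h1 := congrArg Prod.fst this
    have h2 := congrArg Prod.snd this
    simp [Prod.fst_add, Prod.snd_add] at h1 h2
    exact prodEq (by simpa using h1.symm) (by omega)
  exact (factor_unique G hdg hdν' hsν' hdf hdν hsν (by rw [hcν', hcν])).1

lemma fiter_zero (G : TwoGraph) (α β : G.Path) : G.FIter 0 α β ↔ α = β := by
  simp [TwoGraph.FIter]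

lemma fiter_succ (G : TwoGraph) (k : ℕ) (α β : G.Path) :
    G.FIter (k + 1) α β ↔ ∃ γ, G.FStep α γ ∧ G.FIter k γ β := by
  simp [TwoGraph.FIter]

lemma fstep_deg (G : TwoGraph) {α β : G.Path} (h : G.FStep α β) : G.d β = G.d α := by
  obtain ⟨hbα, hbβ, f, f', hf, hf', hsf, hsβ, hc⟩ := h
  have e : G.d β + G.d f' = G.d f + G.d α := by
    rw [← G.d_comp β f' hsβ, ← G.d_comp f α hsf, hc]
  rw [hf, hf'] at e
  have e1 := congrArg Prod.fst e
  have e2 := congrArg Prod.snd e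
  simp [Prod.fst_add, Prod.snd_add] at e1 e2
  exact prodEq (by omega) (by omega)

lemma fstep_total (G : TwoGraph)
    (hrc : ∀ v, G.IsVertex v → ∃ lam, G.IsIsolatedRedCycle lam ∧ G.r lam = v)
    (α : G.Path) (hα : G.IsBlue α) : ∃ β, G.FStep α β := by
  have hv : G.IsVertex (G.r α) := G.d_r α
  obtain ⟨f, ⟨hf, hsf⟩, _⟩ := redEdge_source G hrc (G.r α) hv
  have hα2 : (G.d α).2 = 0 := hα
  have hd : G.d (G.comp f α) = ((G.d α).1, 0) + (0, 1) := by
    rw [G.d_comp f α hsf, hf]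
    exact prodEq (by simp) (by simp [hα2])
  obtain ⟨β, f', hdβ, hdf', hsβ, hcβ⟩ :=
    factor_exists G (G.comp f α) ((G.d α).1, 0) (0, 1) hd
  have hbβ : G.IsBlue β := by show (G.d β).2 = 0; rw [hdβ]
  exact ⟨β, hα, hbβ, f, f', hf, hdf', hsf, hsβ, hcβ.symm⟩

lemma fstep_det (G : TwoGraph)
    (hrc : ∀ v, G.IsVertex v → ∃ lam, G.IsIsolatedRedCycle lam ∧ G.r lam = v)
    {α β β' : G.Path} (h : G.FStep α β) (h' : G.FStep α β') : β = β' := by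
  have hdβ : G.d β = G.d α := fstep_deg G h
  have hdβ' : G.d β' = G.d α := fstep_deg G h'
  obtain ⟨hbα, hbβ, f, f', hf, hf', hsf, hsβ, hc⟩ := h
  obtain ⟨_, hbβ', g, g', hg, hg', hsg, hsβ', hc'⟩ := h'
  have hv : G.IsVertex (G.r α) := G.d_r α
  obtain ⟨f0, _, huniq⟩ := redEdge_source G hrc (G.r α) hv
  have hfg : f = g := (huniq f ⟨hf, hsf⟩).trans (huniq g ⟨hg, hsg⟩).symm
  exact (factor_unique G hdβ hf' hsβ hdβ' hg' hsβ'
    (by rw [← hc, ← hc', hfg])).1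

lemma fstep_inj (G : TwoGraph)
    (hrc : ∀ v, G.IsVertex v → ∃ lam, G.IsIsolatedRedCycle lam ∧ G.r lam = v)
    {α α' β : G.Path} (h : G.FStep α β) (h' : G.FStep α' β) : α = α' := by
  have hdα : G.d α = G.d β := (fstep_deg G h).symm
  have hdα' : G.d α' = G.d β := (fstep_deg G h').symm
  obtain ⟨hbα, hbβ, f, f', hf, hf', hsf, hsβ, hc⟩ := h
  obtain ⟨hbα', _, g, g', hg, hg', hsg, hsβ', hc'⟩ := h'
  have hv : G.IsVertex (G.s β) := G.d_s β
  obtain ⟨f0, _, huniq⟩ := redEdge_range G hrc (G.s β) hv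
  have hfg : f' = g' := (huniq f' ⟨hf', hsβ.symm⟩).trans (huniq g' ⟨hg', hsβ'.symm⟩).symm
  exact (factor_unique G hf hdα hsf hg hdα' hsg
    (by rw [hc, hc', hfg])).2

lemma fiter_blue (G : TwoGraph) {k : ℕ} {α β : G.Path}
    (h : G.FIter k α β) (hα : G.IsBlue α) : G.IsBlue β := by
  induction k generalizing α with
  | zero => exact (fiter_zero G α β).mp h ▸ hα
  | succ k ih =>
    obtain ⟨γ, hs, ht⟩ := (fiter_succ G k α β).mp h
    exact ih ht hs.2.1

lemma fiter_total (G : TwoGraph)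
    (hrc : ∀ v, G.IsVertex v → ∃ lam, G.IsIsolatedRedCycle lam ∧ G.r lam = v)
    (k : ℕ) (α : G.Path) (hα : G.IsBlue α) : ∃ β, G.FIter k α β := by
  induction k generalizing α with
  | zero => exact ⟨α, (fiter_zero G α α).mpr rfl⟩
  | succ k ih =>
    obtain ⟨β, hβ⟩ := fstep_total G hrc α hα
    obtain ⟨γ, hγ⟩ := ih β hβ.2.1
    exact ⟨γ, (fiter_succ G k α γ).mpr ⟨β, hβ, hγ⟩⟩

lemma fiter_comp (G : TwoGraph) :
    ∀ (p q : ℕ) (α β γ : G.Path), G.FIter p α β → G.FIter q β γ →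
      G.FIter (p + q) α γ := by
  intro p
  induction p with
  | zero =>
    intro q α β γ h h'
    have h : α = β := (fiter_zero G α β).mp h
    rw [Nat.zero_add]
    exact h ▸ h'
  | succ p ih =>
    intro q α β γ h h'
    obtain ⟨δ, hs, ht⟩ := (fiter_succ G p α β).mp h
    rw [Nat.succ_add]
    exact (fiter_succ G (p + q) α γ).mpr ⟨δ, hs, ih q δ β γ ht h'⟩

lemma fiter_det (G : TwoGraph)
    (hrc : ∀ v, G.IsVertex v → ∃ lam, G.IsIsolatedRedCycle lam ∧ G.r lam = v)
    {k : ℕ} {α β β' : G.Path} (h : G.FIter k α β) (h' : G.FIter k α β') : β = β' := by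
  induction k generalizing α with
  | zero => rw [← (fiter_zero G α β).mp h, ← (fiter_zero G α β').mp h']
  | succ k ih =>
    obtain ⟨γ, hs, ht⟩ := (fiter_succ G k α β).mp h
    obtain ⟨γ', hs', ht'⟩ := (fiter_succ G k α β').mp h'
    have : γ = γ' := fstep_det G hrc hs hs'
    exact ih ht (this ▸ ht')

lemma fiter_inj (G : TwoGraph)
    (hrc : ∀ v, G.IsVertex v → ∃ lam, G.IsIsolatedRedCycle lam ∧ G.r lam = v)
    {k : ℕ} {α α' β : G.Path} (h : G.FIter k α β) (h' : G.FIter k α' β) : α = α' := by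
  induction k generalizing α α' with
  | zero => rw [(fiter_zero G α β).mp h, (fiter_zero G α' β).mp h']
  | succ k ih =>
    obtain ⟨γ, hs, ht⟩ := (fiter_succ G k α β).mp h
    obtain ⟨γ', hs', ht'⟩ := (fiter_succ G k α' β).mp h'
    have : γ = γ' := ih ht ht'
    exact fstep_inj G hrc hs (this ▸ hs')

lemma deg_eq (G : TwoGraph) {μ μ' α α' : G.Path}
    (h1 : G.s μ = G.r α) (h2 : G.s α' = G.r μ')
    (h3 : G.comp μ α = G.comp α' μ') : G.d μ + G.d α = G.d α' + G.d μ' := by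
  rw [← G.d_comp μ α h1, ← G.d_comp α' μ' h2, h3]

/-- The bridge: `μ α = α' μ'` with `d μ = (0, m)` implies `α' = 𝓕^m(α)`. -/
lemma bridge (G : TwoGraph) :
    ∀ (m : ℕ) (μ μ' α α' : G.Path), G.d μ = (0, m) → G.IsRed μ' →
      G.IsBlue α → G.IsBlue α' → G.s μ = G.r α → G.s α' = G.r μ' →
      G.comp μ α = G.comp α' μ' → G.FIter m α α' := by
  intro m
  induction m with
  | zero =>
    intro μ μ' α α' hdμ hμ' hα hα' h1 h2 h3
    have hα2 : (G.d α).2 = 0 := hα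
    have hα'2 : (G.d α').2 = 0 := hα'
    have hμ'1 : (G.d μ').1 = 0 := hμ'
    have e := deg_eq G h1 h2 h3
    rw [hdμ] at e
    have e2 := congrArg Prod.snd e
    simp [Prod.snd_add] at e2
    have h22 : (G.d μ').2 = 0 := by omega
    have hdμ' : G.d μ' = 0 := prodEq hμ'1 h22
    have hμv : G.s μ = μ := G.s_vertex μ (by rw [hdμ]; rfl)
    have hμ'v : G.r μ' = μ' := G.r_vertex μ' hdμ'
    have hαeq : G.comp μ α = α := by
      have : μ = G.r α := by rw [← h1, hμv]
      rw [this, G.id_comp]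
    have hα'eq : G.comp α' μ' = α' := by
      have : μ' = G.s α' := by rw [h2, hμ'v]
      rw [this, G.comp_id]
    exact (fiter_zero G α α').mpr (by rw [← hαeq, h3, hα'eq])
  | succ m ih =>
    intro μ μ' α α' hdμ hμ' hα hα' h1 h2 h3
    have hα2 : (G.d α).2 = 0 := hα
    have hα'2 : (G.d α').2 = 0 := hα'
    have hμ'1 : (G.d μ').1 = 0 := hμ'
    -- factor μ = ρ f
    have hsum1 : G.d μ = (0, m) + (0, 1) := by rw [hdμ]; rfl
    obtain ⟨ρ, f, hdρ, hdf, hsρ, hcρ⟩ := factor_exists G μ (0, m) (0, 1) hsum1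
    have hsf : G.s f = G.r α := by rw [← h1, ← hcρ, G.s_comp ρ f hsρ]
    -- factor f α = β f'
    have hsum2 : G.d (G.comp f α) = ((G.d α).1, 0) + (0, 1) := by
      rw [G.d_comp f α hsf, hdf]
      exact prodEq (by simp) (by simp [hα2])
    obtain ⟨β, f', hdβ, hdf', hsβ, hcβ⟩ :=
      factor_exists G (G.comp f α) ((G.d α).1, 0) (0, 1) hsum2
    have hbβ : G.IsBlue β := by show (G.d β).2 = 0; rw [hdβ]
    have hstep : G.FStep α β := ⟨hα, hbβ, f, f', hdf, hdf', hsf, hsβ, hcβ.symm⟩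
    have hrβ : G.s ρ = G.r β := by
      rw [hsρ, ← G.r_comp f α hsf, ← hcβ, G.r_comp β f' hsβ]
    have hL : G.comp (G.comp ρ β) f' = G.comp μ α := by
      rw [← hcρ, G.comp_assoc ρ f α hsρ hsf, ← hcβ,
        ← G.comp_assoc ρ β f' hrβ hsβ]
    -- factor μ' = μ'' f''
    have e := deg_eq G h1 h2 h3
    rw [hdμ] at e
    have e1 := congrArg Prod.fst e
    have e2 := congrArg Prod.snd e
    simp [Prod.fst_add, Prod.snd_add] at e1 e2
    have hdμ' : G.d μ' = (0, m + 1) := prodEq hμ'1 (by omega)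
    have hsum3 : G.d μ' = (0, m) + (0, 1) := by rw [hdμ']; rfl
    obtain ⟨μ'', f'', hdμ''2, hdf'', hsμ'', hcμ''⟩ :=
      factor_exists G μ' (0, m) (0, 1) hsum3
    have h2' : G.s α' = G.r μ'' := by rw [h2, ← hcμ'', G.r_comp μ'' f'' hsμ'']
    have hR : G.comp (G.comp α' μ'') f'' = G.comp α' μ' := by
      rw [← hcμ'', ← G.comp_assoc α' μ'' f'' h2' hsμ'']
    -- compare the two factorisations of μ α at degree ((d α).1, m) + (0,1)
    have ha' : (G.d α').1 = (G.d α).1 := by omega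
    have hd1 : G.d (G.comp ρ β) = ((G.d α).1, m) := by
      rw [G.d_comp ρ β hrβ, hdρ, hdβ]
      exact prodEq (by simp) (by simp)
    have hd2 : G.d (G.comp α' μ'') = ((G.d α).1, m) := by
      rw [G.d_comp α' μ'' h2', hdμ''2]
      exact prodEq (by simp [ha']) (by simp [hα'2])
    have hs1 : G.s (G.comp ρ β) = G.r f' := by rw [G.s_comp ρ β hrβ, hsβ]
    have hs2 : G.s (G.comp α' μ'') = G.r f'' := by rw [G.s_comp α' μ'' h2', hsμ'']
    have hcomb : G.comp (G.comp ρ β) f' = G.comp (G.comp α' μ'') f'' := by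
      rw [hL, h3, hR]
    have hEq := (factor_unique G hd1 hdf' hs1 hd2 hdf'' hs2 hcomb).1
    have hρred : G.IsRed μ'' := by show (G.d μ'').1 = 0; rw [hdμ''2]
    exact (fiter_succ G m α α').mpr
      ⟨β, hstep, ih ρ μ'' β α' hdρ hρred hbβ hα' hrβ h2' hEq⟩

/-- Elements of the same `𝓕`-orbit have the same return times. -/
lemma orbit_equiv (G : TwoGraph)
    (hrc : ∀ v, G.IsVertex v → ∃ lam, G.IsIsolatedRedCycle lam ∧ G.r lam = v)
    {m : ℕ} {α α' : G.Path} (hα : G.IsBlue α) (hα' : G.IsBlue α')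
    (h : G.FIter m α α') : ∀ j, G.FIter j α α ↔ G.FIter j α' α' := by
  intro j
  constructor
  · intro hj
    obtain ⟨x, hx⟩ := fiter_total G hrc j α' hα'
    have c1 : G.FIter (m + j) α x := fiter_comp G m j α α' x h hx
    have c2 : G.FIter (j + m) α α' := fiter_comp G j m α α α' hj h
    rw [Nat.add_comm] at c2
    rwa [fiter_det G hrc c1 c2] at hx
  · intro hj
    obtain ⟨x, hx⟩ := fiter_total G hrc j α hα
    have hbx : G.IsBlue x := fiter_blue G hx hα
    obtain ⟨z, hz⟩ := fiter_total G hrc m x hbx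
    have c1 : G.FIter (j + m) α z := fiter_comp G j m α x z hx hz
    have c2 : G.FIter (m + j) α α' := fiter_comp G m j α α' α' h hj
    rw [Nat.add_comm] at c2
    have hzα' : z = α' := fiter_det G hrc c1 c2
    subst hzα'
    rwa [fiter_inj G hrc hz h] at hx

end Stmt13Aux

/-- If `μ α = α' μ'` with `μ, μ'` red and `α, α'` blue, then
`o(α) = o(α')`. -/
theorem stmt13 (G : TwoGraph) (N : ℕ∞) (V : ℕ → Set G.Path) (hGBD : IsGBD G N V)
    (μ μ' α α' : G.Path)
    (hμ : G.IsRed μ) (hμ' : G.IsRed μ') (hα : G.IsBlue α) (hα' : G.IsBlue α')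
    (h1 : G.s μ = G.r α) (h2 : G.s α' = G.r μ')
    (h3 : G.comp μ α = G.comp α' μ') :
    ∀ k, G.HasOrder α k ↔ G.HasOrder α' k := by
  have hrc := hGBD.red_cycle
  have hμ1 : (G.d μ).1 = 0 := hμ
  have hdμ : G.d μ = (0, (G.d μ).2) := Stmt13Aux.prodEq hμ1 rfl
  have hbr := Stmt13Aux.bridge G (G.d μ).2 μ μ' α α' hdμ hμ' hα hα' h1 h2 h3
  have hiff := Stmt13Aux.orbit_equiv G hrc hα hα' hbr
  intro k
  constructor
  · rintro ⟨hk, hit, hmin⟩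
    exact ⟨hk, (hiff k).mp hit, fun m' hm1 hm2 hc => hmin m' hm1 hm2 ((hiff m').mpr hc)⟩
  · rintro ⟨hk, hit, hmin⟩
    exact ⟨hk, (hiff k).mpr hit, fun m' hm1 hm2 hc => hmin m' hm1 hm2 ((hiff m').mp hc)⟩
end

section
/- Let Λ be a generalised Bratteli diagram of infinite depth and let x be an infinite path in Λ such that o(x(0, ne₁)) → ∞ as n → ∞. Then x is aperiodic: for all p, q ∈ ℕ², σ^p(x) = σ^q(x) implies p = q. -/
open scoped ENNReal

/-!
If `σ^p x = σ^q x` then `x(p) = x(q)`; since `x(a, b)` lies in level `ℓ + a`, where `ℓ` is the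
level of `x(0)`, this forces `p₁ = q₁`, and we may assume `p₂ < q₂`; put `k = q₂ - p₂`. The
commuting squares of `x` show that `𝓕` maps `x((a, b + 1), (a + n, b + 1))` to
`x((a, b), (a + n, b))`, so periodicity gives `𝓕ᵏ γ = γ` for `γ = x((p₁, 0), (p₁ + M, 0))`,
whatever `M` is. For every blue `δ'` of degree `p₁ e₁` with range in level `ℓ` we get
`𝓕ᵏ (δ' γ) = δ'' γ` with `δ''` of the same kind, so `𝓕ᵏ` permutes the finitely many paths
`δ' γ`, among them `x(0, (p₁ + M) e₁)`. Hence the order of `x(0, (p₁ + M) e₁)` is at most `k`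
times the number of such `δ'`, a bound independent of `M`, contradicting `o(x(0, n e₁)) → ∞`.
-/

theorem Set.MapsTo.exists_isPeriodicPt_le_ncard {α : Type*} {f : α → α} {s : Set α}
    (hs : s.Finite) (hf : Set.MapsTo f s s) (hinj : Set.InjOn f s) {a : α} (ha : a ∈ s) :
    ∃ n, 0 < n ∧ n ≤ s.ncard ∧ Function.IsPeriodicPt f n a := by
  have := hs.fintype
  set g := hf.restrict f s s
  have hg : (⟨a, ha⟩ : s) ∈ Function.periodicPts g :=
    (hf.restrict_inj.2 hinj).mem_periodicPts _
  refine ⟨Function.minimalPeriod g ⟨a, ha⟩, Function.minimalPeriod_pos_of_mem_periodicPts hg,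
    ?_, ?_⟩
  · rw [← Nat.card_coe_set_eq, Nat.card_eq_fintype_card]
    exact Function.minimalPeriod_le_card
  · have h := congrArg Subtype.val (Function.isPeriodicPt_minimalPeriod g ⟨a, ha⟩)
    rwa [hf.coe_iterate_restrict] at h

namespace TwoGraph

variable {G : TwoGraph}

lemma isVertex_r (p : G.Path) : G.IsVertex (G.r p) := G.d_r p

lemma isVertex_s (p : G.Path) : G.IsVertex (G.s p) := G.d_s p

lemma IsBlue.of_d_eq {α β : G.Path} (hα : G.IsBlue α) (h : G.d β = G.d α) : G.IsBlue β := by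
  unfold IsBlue at *
  rw [h, hα]

lemma IsBlue.comp {α β : G.Path} (hα : G.IsBlue α) (hβ : G.IsBlue β) (hs : G.s α = G.r β) :
    G.IsBlue (G.comp α β) := by
  unfold IsBlue at *
  rw [G.d_comp α β hs, Prod.snd_add, hα, hβ]

lemma comp_inj_of_d_left {a b a' b' : G.Path} (hs : G.s a = G.r b) (hs' : G.s a' = G.r b')
    (h : G.comp a b = G.comp a' b') (hd : G.d a = G.d a') : a = a' ∧ b = b' := by
  have hdb : G.d b = G.d b' := by
    have := congrArg G.d h
    rw [G.d_comp a b hs, G.d_comp a' b' hs', hd] at this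
    exact add_left_cancel this
  obtain ⟨_, -, huniq⟩ := G.factor (G.comp a b) (G.d a) (G.d b) (G.d_comp a b hs)
  have e := (huniq (a, b) ⟨rfl, rfl, hs, rfl⟩).trans
    (huniq (a', b') ⟨hd.symm, hdb.symm, hs', h.symm⟩).symm
  exact Prod.ext_iff.1 e

lemma comp_inj_of_d_right {a b a' b' : G.Path} (hs : G.s a = G.r b) (hs' : G.s a' = G.r b')
    (h : G.comp a b = G.comp a' b') (hd : G.d b = G.d b') : a = a' ∧ b = b' := by
  refine comp_inj_of_d_left hs hs' h ?_
  have := congrArg G.d h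
  rw [G.d_comp a b hs, G.d_comp a' b' hs', hd] at this
  exact add_right_cancel this

lemma exists_comp_redEdge_eq {f α : G.Path} (hf : G.IsRedEdge f) (hs : G.s f = G.r α) :
    ∃ α' f', G.d α' = G.d α ∧ G.IsRedEdge f' ∧ G.s α' = G.r f' ∧
      G.comp f α = G.comp α' f' := by
  have hd : G.d (G.comp f α) = G.d α + (0, 1) := by
    rw [G.d_comp f α hs, hf, add_comm]
  obtain ⟨⟨α', f'⟩, ⟨hdα', hdf', hs', hcomp⟩, -⟩ := G.factor _ _ _ hd
  exact ⟨α', f', hdα', hdf', hs', hcomp.symm⟩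

lemma IsIsolatedRedCycle.existsUnique_redEdge_r {lam : G.Path}
    (h : G.IsIsolatedRedCycle lam) : ∃! f, G.IsRedEdge f ∧ G.r f = G.r lam := by
  obtain ⟨hred, ⟨hd0, -⟩, hnoEntrance, -⟩ := h
  have hd : G.d lam = (0, 1) + (0, (G.d lam).2 - 1) := by
    have h1 : (G.d lam).1 = 0 := hred
    have h2 : (G.d lam).2 ≠ 0 := fun h2 => hd0 (Prod.ext h1 h2)
    ext <;> simp <;> omega
  obtain ⟨⟨f, ν⟩, ⟨hf, -, hs, hcomp⟩, -⟩ := G.factor lam _ _ hd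
  refine ⟨f, ⟨hf, by rw [← hcomp, G.r_comp f ν hs]⟩, fun f' ⟨hf', hr'⟩ => ?_⟩
  obtain ⟨ν', hs', hcomp'⟩ := hnoEntrance _ (hd ▸ le_self_add) f' hf' hr'
  exact (comp_inj_of_d_left hs' hs (hcomp'.trans hcomp.symm) (hf'.trans hf.symm)).1

lemma IsIsolatedRedCycle.existsUnique_redEdge_s {lam : G.Path}
    (h : G.IsIsolatedRedCycle lam) : ∃! f, G.IsRedEdge f ∧ G.s f = G.s lam := by
  obtain ⟨hred, ⟨hd0, -⟩, -, hnoExit⟩ := h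
  have hd : G.d lam = (0, (G.d lam).2 - 1) + (0, 1) := by
    have h1 : (G.d lam).1 = 0 := hred
    have h2 : (G.d lam).2 ≠ 0 := fun h2 => hd0 (Prod.ext h1 h2)
    ext <;> simp <;> omega
  obtain ⟨⟨ν, f⟩, ⟨-, hf, hs, hcomp⟩, -⟩ := G.factor lam _ _ hd
  refine ⟨f, ⟨hf, by rw [← hcomp, G.s_comp ν f hs]⟩, fun f' ⟨hf', hs'⟩ => ?_⟩
  obtain ⟨ν', hs'', hcomp'⟩ := hnoExit _ (hd ▸ le_add_self) f' hf' hs'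
  exact (comp_inj_of_d_right hs'' hs (hcomp'.trans hcomp.symm) (hf'.trans hf.symm)).2

end TwoGraph

open Classical in
/-- The factorisation permutation `𝓕` as a function, with junk value `α` where `FStep α` has no
witness (in a GBD: off the blue paths). -/
noncomputable def TwoGraph.factorMap (G : TwoGraph) (α : G.Path) : G.Path :=
  if h : ∃ β, G.FStep α β then h.choose else α

namespace IsGBD

open TwoGraph

variable {G : TwoGraph} {N : ℕ∞} {V : ℕ → Set G.Path}

lemma level_eq (hGBD : IsGBD G N V) {v : G.Path} {a b : ℕ} (ha : v ∈ V a)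
    (hb : v ∈ V b) : a = b := by
  by_contra h
  exact Set.disjoint_left.mp (hGBD.level_disjoint a b h) ha hb

lemma existsUnique_redEdge_r (hGBD : IsGBD G N V) {v : G.Path} (hv : G.IsVertex v) :
    ∃! f, G.IsRedEdge f ∧ G.r f = v := by
  obtain ⟨lam, hlam, rfl⟩ := hGBD.red_cycle v hv
  exact hlam.existsUnique_redEdge_r

lemma existsUnique_redEdge_s (hGBD : IsGBD G N V) {v : G.Path} (hv : G.IsVertex v) :
    ∃! f, G.IsRedEdge f ∧ G.s f = v := by
  obtain ⟨lam, hlam, rfl⟩ := hGBD.red_cycle v hv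
  have hrs : G.r lam = G.s lam := hlam.2.1.2.1
  rw [hrs]
  exact hlam.existsUnique_redEdge_s

lemma fStep_factorMap (hGBD : IsGBD G N V) {α : G.Path} (hα : G.IsBlue α) :
    G.FStep α (G.factorMap α) := by
  have hex : ∃ β, G.FStep α β := by
    obtain ⟨f, ⟨hf, hs⟩, -⟩ := hGBD.existsUnique_redEdge_s (isVertex_r α)
    obtain ⟨α', f', hd, hf', hs', hcomp⟩ := exists_comp_redEdge_eq hf hs
    exact ⟨α', hα, show (G.d α').2 = 0 by rw [hd]; exact hα, f, f', hf, hf', hs, hs', hcomp⟩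
  rw [factorMap, dif_pos hex]
  exact hex.choose_spec

lemma factorMap_eq (hGBD : IsGBD G N V) {α β : G.Path} (h : G.FStep α β) :
    G.factorMap α = β := by
  obtain ⟨hα, -, f₁, f₁', hf₁, hf₁', hs₁, hs₁', hcomp₁⟩ := hGBD.fStep_factorMap h.1
  obtain ⟨-, -, f₂, f₂', hf₂, hf₂', hs₂, hs₂', hcomp₂⟩ := h
  obtain rfl : f₁ = f₂ :=
    (hGBD.existsUnique_redEdge_s (isVertex_r α)).unique ⟨hf₁, hs₁⟩ ⟨hf₂, hs₂⟩
  exact (comp_inj_of_d_right hs₁' hs₂' (hcomp₁.symm.trans hcomp₂) (hf₁'.trans hf₂'.symm)).1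

lemma fStep_inj (hGBD : IsGBD G N V) {α₁ α₂ β : G.Path} (h₁ : G.FStep α₁ β)
    (h₂ : G.FStep α₂ β) : α₁ = α₂ := by
  obtain ⟨-, -, f₁, f₁', hf₁, hf₁', hs₁, hs₁', hcomp₁⟩ := h₁
  obtain ⟨-, -, f₂, f₂', hf₂, hf₂', hs₂, hs₂', hcomp₂⟩ := h₂
  obtain rfl : f₁' = f₂' := (hGBD.existsUnique_redEdge_r (isVertex_s β)).unique
    ⟨hf₁', hs₁'.symm⟩ ⟨hf₂', hs₂'.symm⟩
  have hcomp : G.comp f₁ α₁ = G.comp f₂ α₂ := hcomp₁.trans hcomp₂.symm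
  have hr : G.r f₂ = G.r f₁ := by
    rw [← G.r_comp f₁ α₁ hs₁, ← G.r_comp f₂ α₂ hs₂, hcomp]
  obtain rfl : f₁ = f₂ := (hGBD.existsUnique_redEdge_r (isVertex_r f₁)).unique
    ⟨hf₁, rfl⟩ ⟨hf₂, hr⟩
  exact (comp_inj_of_d_left hs₁ hs₂ hcomp rfl).2

lemma mapsTo_factorMap (hGBD : IsGBD G N V) :
    Set.MapsTo G.factorMap {α | G.IsBlue α} {α | G.IsBlue α} :=
  fun _ hα => (hGBD.fStep_factorMap hα).2.1

lemma injOn_factorMap (hGBD : IsGBD G N V) :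
    Set.InjOn G.factorMap {α | G.IsBlue α} :=
  fun _ hα₁ _ hα₂ h =>
    hGBD.fStep_inj (hGBD.fStep_factorMap hα₁) (h ▸ hGBD.fStep_factorMap hα₂)

lemma fIter_iff (hGBD : IsGBD G N V) {α β : G.Path} (hα : G.IsBlue α) (k : ℕ) :
    G.FIter k α β ↔ G.factorMap^[k] α = β := by
  induction k generalizing α with
  | zero => rfl
  | succ k ih =>
    rw [Function.iterate_succ_apply, ← ih (hGBD.mapsTo_factorMap hα)]
    constructor
    · rintro ⟨γ, hstep, hiter⟩
      rwa [hGBD.factorMap_eq hstep]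
    · exact fun h => ⟨_, hGBD.fStep_factorMap hα, h⟩

lemma hasOrder_minimalPeriod (hGBD : IsGBD G N V) {α : G.Path} (hα : G.IsBlue α)
    (hper : α ∈ Function.periodicPts G.factorMap) :
    G.HasOrder α (Function.minimalPeriod G.factorMap α) := by
  refine ⟨Function.minimalPeriod_pos_of_mem_periodicPts hper,
    (hGBD.fIter_iff hα _).2 (Function.isPeriodicPt_minimalPeriod _ _), fun m hm hlt h => ?_⟩
  exact Function.not_isPeriodicPt_of_pos_of_lt_minimalPeriod hm.ne' hlt
    ((hGBD.fIter_iff hα m).1 h)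

lemma factorMap_comp (hGBD : IsGBD G N V) {δ γ : G.Path} (hδ : G.IsBlue δ)
    (hγ : G.IsBlue γ) (hs : G.s δ = G.r γ) :
    ∃ δ', G.d δ' = G.d δ ∧ G.s δ' = G.r (G.factorMap γ) ∧
      G.factorMap (G.comp δ γ) = G.comp δ' (G.factorMap γ) := by
  obtain ⟨f, ⟨hf, hsf⟩, -⟩ := hGBD.existsUnique_redEdge_s (isVertex_r δ)
  obtain ⟨δ', f₂, hdδ', hf₂, hs₂, hcomp₂⟩ := exists_comp_redEdge_eq hf hsf
  have hsf₂ : G.s f₂ = G.r γ := by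
    rw [← G.s_comp δ' f₂ hs₂, ← hcomp₂, G.s_comp f δ hsf, hs]
  obtain ⟨γ', g, hdγ', hg, hsg, hcomp₃⟩ := exists_comp_redEdge_eq hf₂ hsf₂
  have hFγ : G.factorMap γ = γ' :=
    hGBD.factorMap_eq ⟨hγ, hγ.of_d_eq hdγ', f₂, g, hf₂, hg, hsf₂, hsg, hcomp₃⟩
  have hs' : G.s δ' = G.r γ' := by
    rw [hs₂, ← G.r_comp γ' g hsg, ← hcomp₃, G.r_comp f₂ γ hsf₂]
  refine ⟨δ', hdδ', hFγ ▸ hs', hFγ ▸ hGBD.factorMap_eq ⟨hδ.comp hγ hs,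
    (hδ.of_d_eq hdδ').comp (hγ.of_d_eq hdγ') hs', f, g, hf, hg,
    hsf.trans (G.r_comp δ γ hs).symm, (G.s_comp δ' γ' hs').trans hsg, ?_⟩⟩
  calc G.comp f (G.comp δ γ) = G.comp (G.comp δ' f₂) γ := by
        rw [← G.comp_assoc f δ γ hsf hs, hcomp₂]
    _ = G.comp (G.comp δ' γ') g := by
        rw [G.comp_assoc δ' f₂ γ hs₂ hsf₂, hcomp₃, G.comp_assoc δ' γ' g hs' hsg]

lemma iterate_factorMap_comp (hGBD : IsGBD G N V) {δ γ : G.Path} (hδ : G.IsBlue δ)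
    (hγ : G.IsBlue γ) (hs : G.s δ = G.r γ) (k : ℕ) :
    ∃ δ', G.d δ' = G.d δ ∧ G.s δ' = G.r (G.factorMap^[k] γ) ∧
      G.factorMap^[k] (G.comp δ γ) = G.comp δ' (G.factorMap^[k] γ) := by
  induction k with
  | zero => exact ⟨δ, rfl, hs, rfl⟩
  | succ k ih =>
    obtain ⟨δ', hd', hs', heq'⟩ := ih
    obtain ⟨δ'', hd'', hs'', heq''⟩ :=
      hGBD.factorMap_comp (hδ.of_d_eq hd') (hGBD.mapsTo_factorMap.iterate k hγ) hs'
    refine ⟨δ'', hd''.trans hd', ?_, ?_⟩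
    · rwa [Function.iterate_succ_apply']
    · rw [Function.iterate_succ_apply', Function.iterate_succ_apply', heq', heq'']

lemma mapsTo_factorMap_level (hGBD : IsGBD G N V) (ℓ : ℕ) :
    Set.MapsTo G.factorMap {α | G.IsBlue α ∧ G.r α ∈ V ℓ} {α | G.IsBlue α ∧ G.r α ∈ V ℓ} := by
  rintro α ⟨hα, hℓ⟩
  obtain ⟨-, hFα, f, f', hf, -, hs, hs', hcomp⟩ := hGBD.fStep_factorMap hα
  obtain ⟨n, hrn, hsn⟩ := hGBD.red_level f hf
  obtain rfl := hGBD.level_eq (hs ▸ hsn : G.r α ∈ V n) hℓ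
  refine ⟨hFα, ?_⟩
  rwa [← G.r_comp _ f' hs', ← hcomp, G.r_comp f α hs]

lemma finite_setOf_d_eq_r_mem (hGBD : IsGBD G N V) (n : ℕ × ℕ) (ℓ : ℕ) :
    {δ | G.d δ = n ∧ G.r δ ∈ V ℓ}.Finite :=
  ((hGBD.level_finite ℓ).biUnion fun v hv => hGBD.rowFinite v n (hGBD.level_vertex ℓ hv)).subset
    fun _ ⟨hd, hr⟩ => Set.mem_biUnion hr ⟨rfl, hd⟩

lemma exists_isPeriodicPt_factorMap_comp (hGBD : IsGBD G N V) {δ γ : G.Path}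
    (hδ : G.IsBlue δ) (hγ : G.IsBlue γ) (hs : G.s δ = G.r γ) {ℓ : ℕ} (hℓ : G.r δ ∈ V ℓ)
    {k : ℕ} (hk : 0 < k) (hγk : G.factorMap^[k] γ = γ) :
    ∃ n, 0 < n ∧ n ≤ k * {δ' | G.d δ' = G.d δ ∧ G.r δ' ∈ V ℓ}.ncard ∧
      Function.IsPeriodicPt G.factorMap n (G.comp δ γ) := by
  set H := {δ' | G.d δ' = G.d δ ∧ G.r δ' ∈ V ℓ}
  have hH : H.Finite := hGBD.finite_setOf_d_eq_r_mem _ ℓ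
  set S := (G.comp · γ) '' {δ' | δ' ∈ H ∧ G.s δ' = G.r γ}
  have hSH : S.ncard ≤ H.ncard :=
    (Set.ncard_image_le (hH.subset fun _ h => h.1)).trans
      (Set.ncard_le_ncard (fun _ h => h.1) hH)
  have hSblue : S ⊆ {α | G.IsBlue α} := by
    rintro _ ⟨δ', ⟨⟨hd, -⟩, hs'⟩, rfl⟩
    exact (hδ.of_d_eq hd).comp hγ hs'
  have hmaps : Set.MapsTo G.factorMap^[k] S S := by
    rintro _ ⟨δ', ⟨⟨hd, hr⟩, hs'⟩, rfl⟩
    obtain ⟨δ'', hd'', hs'', heq⟩ := hGBD.iterate_factorMap_comp (hδ.of_d_eq hd) hγ hs' k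
    rw [hγk] at hs'' heq
    have hlevel := (hGBD.mapsTo_factorMap_level ℓ).iterate k
      ⟨(hδ.of_d_eq hd).comp hγ hs', (G.r_comp δ' γ hs').symm ▸ hr⟩
    rw [heq] at hlevel
    exact ⟨δ'', ⟨⟨hd''.trans hd, G.r_comp δ'' γ hs'' ▸ hlevel.2⟩, hs''⟩, heq.symm⟩
  have hinj : Set.InjOn G.factorMap^[k] S :=
    (hGBD.injOn_factorMap.iterate hGBD.mapsTo_factorMap k).mono hSblue
  obtain ⟨n, hn, hnS, hper⟩ := hmaps.exists_isPeriodicPt_le_ncard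
    ((hH.subset fun _ h => h.1).image _) hinj ⟨δ, ⟨⟨rfl, hℓ⟩, hs⟩, rfl⟩
  refine ⟨k * n, Nat.mul_pos hk hn, Nat.mul_le_mul_left k (hnS.trans hSH), ?_⟩
  rwa [Function.IsPeriodicPt, Function.IsFixedPt, Function.iterate_mul]

end IsGBD

namespace InfPath

open TwoGraph

variable {G : TwoGraph} {N : ℕ∞} {V : ℕ → Set G.Path} (x : InfPath G)

lemma isVertex_seg_self (m : ℕ × ℕ) : G.IsVertex (x.seg m m) := by
  rw [IsVertex, x.deg m m le_rfl, tsub_self]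

lemma isBlue_seg {a c : ℕ} (b : ℕ) (h : a ≤ c) : G.IsBlue (x.seg (a, b) (c, b)) := by
  rw [IsBlue, x.deg _ _ (Prod.mk_le_mk.2 ⟨h, le_rfl⟩), Prod.mk_sub_mk, tsub_self]

lemma isBlueEdge_seg (a b : ℕ) : G.IsBlueEdge (x.seg (a, b) (a + 1, b)) := by
  rw [IsBlueEdge, x.deg _ _ (Prod.mk_le_mk.2 ⟨a.le_add_right 1, le_rfl⟩), Prod.mk_sub_mk,
    add_tsub_cancel_left, tsub_self]

lemma isRedEdge_seg (a b : ℕ) : G.IsRedEdge (x.seg (a, b) (a, b + 1)) := by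
  rw [IsRedEdge, x.deg _ _ (Prod.mk_le_mk.2 ⟨le_rfl, b.le_add_right 1⟩), Prod.mk_sub_mk,
    add_tsub_cancel_left, tsub_self]

lemma seg_mem_level (hGBD : IsGBD G N V) {ℓ : ℕ} (h0 : x.seg 0 0 ∈ V ℓ) :
    ∀ a b : ℕ, x.seg (a, b) (a, b) ∈ V (ℓ + a)
  | 0, 0 => h0
  | 0, b + 1 => by
    have hle : ((0, b) : ℕ × ℕ) ≤ (0, b + 1) := Prod.mk_le_mk.2 ⟨le_rfl, b.le_succ⟩
    obtain ⟨n, hr, hs⟩ := hGBD.red_level _ (x.isRedEdge_seg 0 b)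
    rw [x.range_seg _ _ hle] at hr
    rw [x.source_seg _ _ hle] at hs
    rwa [hGBD.level_eq hr (seg_mem_level hGBD h0 0 b)] at hs
  | a + 1, b => by
    have hle : ((a, b) : ℕ × ℕ) ≤ (a + 1, b) := Prod.mk_le_mk.2 ⟨a.le_succ, le_rfl⟩
    obtain ⟨n, hr, hs⟩ := hGBD.blue_level _ (x.isBlueEdge_seg a b)
    rw [x.range_seg _ _ hle] at hr
    rw [x.source_seg _ _ hle] at hs
    rwa [hGBD.level_eq hr (seg_mem_level hGBD h0 a b)] at hs

lemma fst_eq_of_seg_self_eq (hGBD : IsGBD G N V) {p q : ℕ × ℕ}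
    (h : x.seg p p = x.seg q q) : p.1 = q.1 := by
  obtain ⟨ℓ, hℓ⟩ := hGBD.cover _ (x.isVertex_seg_self 0)
  have hp := x.seg_mem_level hGBD hℓ p.1 p.2
  have hq := x.seg_mem_level hGBD hℓ q.1 q.2
  rw [Prod.mk.eta, h] at hp
  rw [Prod.mk.eta] at hq
  exact Nat.add_left_cancel (hGBD.level_eq hp hq)

lemma factorMap_seg (hGBD : IsGBD G N V) (a n b : ℕ) :
    G.factorMap (x.seg (a, b + 1) (a + n, b + 1)) = x.seg (a, b) (a + n, b) := by
  have h₁ : ((a, b) : ℕ × ℕ) ≤ (a, b + 1) := Prod.mk_le_mk.2 ⟨le_rfl, b.le_succ⟩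
  have h₂ : ((a, b + 1) : ℕ × ℕ) ≤ (a + n, b + 1) := Prod.mk_le_mk.2 ⟨a.le_add_right n, le_rfl⟩
  have h₃ : ((a, b) : ℕ × ℕ) ≤ (a + n, b) := Prod.mk_le_mk.2 ⟨a.le_add_right n, le_rfl⟩
  have h₄ : ((a + n, b) : ℕ × ℕ) ≤ (a + n, b + 1) := Prod.mk_le_mk.2 ⟨le_rfl, b.le_succ⟩
  refine hGBD.factorMap_eq ⟨x.isBlue_seg _ (a.le_add_right n), x.isBlue_seg _ (a.le_add_right n),
    _, _, x.isRedEdge_seg a b, x.isRedEdge_seg (a + n) b, ?_, ?_, ?_⟩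
  · rw [x.source_seg _ _ h₁, x.range_seg _ _ h₂]
  · rw [x.source_seg _ _ h₃, x.range_seg _ _ h₄]
  · rw [x.comp_seg _ _ _ h₁ h₂, x.comp_seg _ _ _ h₃ h₄]

lemma iterate_factorMap_seg (hGBD : IsGBD G N V) (a n b : ℕ) :
    ∀ k, G.factorMap^[k] (x.seg (a, b + k) (a + n, b + k)) = x.seg (a, b) (a + n, b)
  | 0 => rfl
  | k + 1 => by
    rw [Function.iterate_succ_apply]
    exact (congrArg _ (x.factorMap_seg hGBD a n (b + k))).trans
      (iterate_factorMap_seg hGBD a n b k)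

lemma iterate_factorMap_seg_eq_self (hGBD : IsGBD G N V) {a n b k : ℕ}
    (h : x.seg (a, b) (a + n, b) = x.seg (a, b + k) (a + n, b + k)) :
    G.factorMap^[k] (x.seg (a, 0) (a + n, 0)) = x.seg (a, 0) (a + n, 0) := by
  have h₁ := x.iterate_factorMap_seg hGBD a n 0 b
  have h₂ := x.iterate_factorMap_seg hGBD a n 0 (b + k)
  rw [zero_add] at h₁ h₂
  rw [← h, Nat.add_comm b k, Function.iterate_add_apply, h₁] at h₂
  exact h₂

lemma not_forall_seg_eq_of_lt (hGBD : IsGBD G N V)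
    (hord : ∀ L : ℕ, ∃ M : ℕ, ∀ n : ℕ, M ≤ n →
      ∀ k, G.HasOrder (x.seg 0 (n, 0)) k → L < k)
    {a b c : ℕ} (hbc : b < c) :
    ¬ ∀ n, x.seg (a, b) (a + n, b) = x.seg (a, c) (a + n, c) := by
  intro hshift
  obtain ⟨ℓ, hℓ⟩ := hGBD.cover _ (x.isVertex_seg_self 0)
  have hle₁ : ((0, 0) : ℕ × ℕ) ≤ (a, 0) := Prod.mk_le_mk.2 ⟨a.zero_le, le_rfl⟩
  obtain ⟨M, hM⟩ := hord ((c - b) *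
    {δ | G.d δ = G.d (x.seg (0, 0) (a, 0)) ∧ G.r δ ∈ V ℓ}.ncard)
  have hle₂ : ((a, 0) : ℕ × ℕ) ≤ (a + M, 0) := Prod.mk_le_mk.2 ⟨a.le_add_right M, le_rfl⟩
  have hγ := x.iterate_factorMap_seg_eq_self hGBD (k := c - b)
    (by rw [hshift M, Nat.add_sub_cancel' hbc.le])
  obtain ⟨n, hn, hnL, hper⟩ := hGBD.exists_isPeriodicPt_factorMap_comp
    (x.isBlue_seg 0 a.zero_le) (x.isBlue_seg 0 (a.le_add_right M))
    (by rw [x.source_seg _ _ hle₁, x.range_seg _ _ hle₂]) (by rwa [x.range_seg _ _ hle₁])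
    (Nat.sub_pos_of_lt hbc) hγ
  rw [x.comp_seg _ _ _ hle₁ hle₂] at hper
  have hord' := hM (a + M) (Nat.le_add_left M a) _ (hGBD.hasOrder_minimalPeriod
    (x.isBlue_seg 0 (Nat.zero_le _)) (Function.mk_mem_periodicPts hn hper))
  exact (hord'.trans_le ((hper.minimalPeriod_le hn).trans hnL)).false

end InfPath

/-- If `o(x(0, n e₁)) → ∞` then the infinite path `x` is aperiodic. -/
theorem stmt14 (G : TwoGraph) (V : ℕ → Set G.Path) (hGBD : IsGBD G ⊤ V)
    (x : InfPath G)
    (hord : ∀ L : ℕ, ∃ M : ℕ, ∀ n : ℕ, M ≤ n →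
      ∀ k, G.HasOrder (x.seg 0 (n, 0)) k → L < k) :
    ∀ p q : ℕ × ℕ,
      (∀ m n : ℕ × ℕ, m ≤ n → x.seg (m + p) (n + p) = x.seg (m + q) (n + q)) →
      p = q := by
  rintro ⟨a, b⟩ ⟨a', c⟩ hpq
  obtain rfl : a = a' := x.fst_eq_of_seg_self_eq hGBD (by simpa using hpq 0 0 le_rfl)
  have hshift : ∀ n, x.seg (a, b) (a + n, b) = x.seg (a, c) (a + n, c) := fun n => by
    simpa [add_comm] using hpq 0 (n, 0) (Prod.mk_le_mk.2 ⟨n.zero_le, le_rfl⟩)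
  rcases lt_trichotomy b c with h | rfl | h
  · exact absurd hshift (x.not_forall_seg_eq_of_lt hGBD hord h)
  · rfl
  · exact absurd (fun n => (hshift n).symm) (x.not_forall_seg_eq_of_lt hGBD hord h)
end
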